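/- arXiv:1601.07436 — 14 statements merged into one kernel-verified Lean document; each statement's English description precedes it below -/
import Mathlib

section
/- Let Λ and X be complete metric spaces and let S_λ(·), λ ∈ Λ, be a parameterized family of semigroups on X. Assume: (G1) each S_λ(·) has a global attractor 𝒜_λ; (G2) there is a bounded subset D of X with 𝒜_λ ⊆ D for every λ ∈ Λ; and (G3) for each t > 0, the map λ ↦ S_λ(t)x is continuous, uniformly for x in bounded subsets of X. Then there is a residual subset Λ_* of Λ such that the map λ ↦ 𝒜_λ, from Λ into the nonempty closed bounded subsets of X with the Hausdorff metric, is continuous at every λ₀ ∈ Λ_*; in particular the set of continuity points is dense in Λ. -/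
/-!
For each `n`, the map `λ ↦ closure (S_λ(n+1) D)` into the closed subsets of `X` with the
Hausdorff metric is continuous by (G3), and by (G1), (G2) it converges pointwise to
`λ ↦ 𝒜_λ` as `n → ∞`. A pointwise limit of continuous maps on a Baire space is continuous
on a residual set: where the sequence is uniformly `ε`-Cauchy on an open set, the limit
oscillates by at most `3ε`, and by Baire these open sets are dense.
-/

open Filter Topology Metric Bornology

/-- `A` attracts every bounded set under the semigroup `S`:
`ρ_X(S(t)B, A) → 0` as `t → ∞` for every bounded `B`. -/
def Attracts {X : Type*} [MetricSpace X] (S : ℝ → X → X) (A : Set X) : Prop :=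
  ∀ B : Set X, IsBounded B → ∀ ε : ℝ, 0 < ε → ∃ T : ℝ, ∀ t ≥ T, ∀ x ∈ B,
    EMetric.infEdist (S t x) A < ENNReal.ofReal ε

/-- A global attractor for the semigroup `S`: a nonempty compact set that is
invariant and attracts every bounded set. -/
def IsGlobalAttractor {X : Type*} [MetricSpace X] (S : ℝ → X → X) (A : Set X) : Prop :=
  IsCompact A ∧ A.Nonempty ∧ (∀ t ≥ (0 : ℝ), S t '' A = A) ∧ Attracts S A

open Set TopologicalSpace
open scoped ENNReal

section BaireOne

variable {Λ Y : Type*} [PseudoEMetricSpace Y] {f : ℕ → Λ → Y} {F : Λ → Y}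

theorem iUnion_setOf_forall_edist_le (hF : ∀ l, Tendsto (f · l) atTop (𝓝 (F l)))
    {ε : ℝ≥0∞} (hε : 0 < ε) : ⋃ N, {l | ∀ n ≥ N, edist (f n l) (f N l) ≤ ε} = univ :=
  eq_univ_of_forall fun l => mem_iUnion.2 <|
    (EMetric.cauchySeq_iff'.1 (hF l).cauchySeq ε hε).imp fun _ hN n hn => (hN n hn).le

variable [TopologicalSpace Λ]

theorem isClosed_setOf_forall_edist_le (hf : ∀ n, Continuous (f n)) (N : ℕ) (ε : ℝ≥0∞) :
    IsClosed {l | ∀ n ≥ N, edist (f n l) (f N l) ≤ ε} := by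
  simp only [ofPred_forall]
  exact isClosed_biInter fun n _ => isClosed_le ((hf n).edist (hf N)) continuous_const

theorem eventually_edist_le_of_mem_interior {N : ℕ} {ε : ℝ≥0∞} {l₀ : Λ} (hε : 0 < ε)
    (hf : ContinuousAt (f N) l₀) (hF : ∀ l, Tendsto (f · l) atTop (𝓝 (F l)))
    (h : l₀ ∈ interior {l | ∀ n ≥ N, edist (f n l) (f N l) ≤ ε}) :
    ∀ᶠ l in 𝓝 l₀, edist (F l) (F l₀) ≤ 3 * ε := by
  have hlim : ∀ l, (∀ n ≥ N, edist (f n l) (f N l) ≤ ε) → edist (F l) (f N l) ≤ ε :=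
    fun l hl => le_of_tendsto ((hF l).edist tendsto_const_nhds) (eventually_atTop.2 ⟨N, hl⟩)
  filter_upwards [mem_interior_iff_mem_nhds.1 h, EMetric.tendsto_nhds.1 hf ε hε] with l hl hfl
  calc edist (F l) (F l₀)
      ≤ edist (F l) (f N l) + edist (f N l) (f N l₀) + edist (f N l₀) (F l₀) :=
        edist_triangle4 _ _ _ _
    _ ≤ ε + ε + ε :=
        add_le_add (add_le_add (hlim l hl) hfl.le)
          (edist_comm (F l₀) _ ▸ hlim l₀ (interior_subset h))
    _ = 3 * ε := by ring

theorem eventually_residual_continuousAt_of_tendsto [BaireSpace Λ] (hf : ∀ n, Continuous (f n))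
    (hF : ∀ l, Tendsto (f · l) atTop (𝓝 (F l))) : ∀ᶠ l in residual Λ, ContinuousAt F l := by
  have hosc : ∀ k : ℕ, ∀ᶠ l in residual Λ, ∀ᶠ x in 𝓝 l,
      edist (F x) (F l) ≤ 3 * (k : ℝ≥0∞)⁻¹ := by
    intro k
    have hk : 0 < (k : ℝ≥0∞)⁻¹ := ENNReal.inv_pos.2 (ENNReal.natCast_ne_top k)
    refine mem_of_superset (residual_of_dense_open (isOpen_iUnion fun _ => isOpen_interior)
      (dense_iUnion_interior_of_closed (isClosed_setOf_forall_edist_le hf · _)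
        (iUnion_setOf_forall_edist_le hF hk))) fun l hl => ?_
    obtain ⟨N, hN⟩ := mem_iUnion.1 hl
    exact eventually_edist_le_of_mem_interior hk (hf N).continuousAt hF hN
  filter_upwards [eventually_countable_forall.2 hosc] with l₀ hl₀
  refine EMetric.tendsto_nhds.2 fun δ hδ => ?_
  obtain ⟨k, hk⟩ :=
    ENNReal.exists_inv_nat_lt (ENNReal.div_pos hδ.ne' (ENNReal.ofNat_ne_top (n := 3))).ne'
  exact (hl₀ k).mono fun l hl => hl.trans_lt (ENNReal.mul_lt_of_lt_div' hk)

end BaireOne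

theorem hausdorffEDist_image_le {α β : Type*} [PseudoEMetricSpace β] {φ ψ : α → β} {D : Set α}
    {r : ℝ≥0∞} (h : ∀ x ∈ D, edist (φ x) (ψ x) ≤ r) : hausdorffEDist (φ '' D) (ψ '' D) ≤ r :=
  hausdorffEDist_le_of_mem_edist
    (by rintro _ ⟨x, hx, rfl⟩; exact ⟨ψ x, mem_image_of_mem ψ hx, h x hx⟩)
    (by rintro _ ⟨x, hx, rfl⟩; exact ⟨φ x, mem_image_of_mem φ hx, edist_comm (φ x) _ ▸ h x hx⟩)

theorem TendstoUniformlyOn.tendsto_closure_image {ι α β : Type*} [EMetricSpace β]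
    {Φ : ι → α → β} {φ : α → β} {p : Filter ι} {D : Set α} (h : TendstoUniformlyOn Φ φ p D) :
    Tendsto (fun i => Closeds.closure (Φ i '' D)) p (𝓝 (Closeds.closure (φ '' D))) := by
  refine nhds_basis_closedEBall.tendsto_right_iff.2 fun ε hε => ?_
  filter_upwards [EMetric.tendstoUniformlyOn_iff.1 h ε hε] with i hi
  show hausdorffEDist (closure (Φ i '' D)) (closure (φ '' D)) ≤ ε
  rw [hausdorffEDist_closure]
  exact hausdorffEDist_image_le fun x hx => edist_comm (φ x) _ ▸ (hi x hx).le

theorem IsGlobalAttractor.tendsto_hausdorffEDist_image {X : Type*} [MetricSpace X]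
    {S : ℝ → X → X} {A D : Set X} (hA : IsGlobalAttractor S A) (hD : IsBounded D)
    (hAD : A ⊆ D) : Tendsto (fun t => hausdorffEDist (S t '' D) A) atTop (𝓝 0) := by
  refine ENNReal.tendsto_nhds_zero.2 fun ε hε => ?_
  obtain ⟨r, -, hr, hrε⟩ := ENNReal.lt_iff_exists_real_btwn.1 hε
  obtain ⟨T, hT⟩ := hA.2.2.2 D hD r (ENNReal.ofReal_pos.1 hr)
  filter_upwards [eventually_ge_atTop T, eventually_ge_atTop 0] with t hTt ht
  refine hausdorffEDist_le_of_infEDist ?_ fun y hy => ?_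
  · rintro _ ⟨x, hx, rfl⟩
    exact ((hT t hTt x hx).trans hrε).le
  · have hyD : y ∈ S t '' D := image_mono hAD ((hA.2.2.1 t ht).symm ▸ hy)
    exact (infEDist_zero_of_mem hyD).trans_le zero_le

theorem stmt3_general {Λ X : Type*} [MetricSpace Λ] [CompleteSpace Λ]
    [MetricSpace X]
    (S : Λ → ℝ → X → X)
    -- (G1): global attractors
    (A : Λ → Set X) (hA : ∀ l : Λ, IsGlobalAttractor (S l) (A l))
    -- (G2): a common bounded set containing all attractors
    (D : Set X) (hD : IsBounded D) (hAD : ∀ l : Λ, A l ⊆ D)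
    -- (G3): continuity in `λ`, uniformly for `x` in bounded sets
    (hG3 : ∀ t : ℝ, 0 < t → ∀ B : Set X, IsBounded B → ∀ l₀ : Λ, ∀ ε : ℝ, 0 < ε →
      ∃ δ : ℝ, 0 < δ ∧ ∀ l : Λ, dist l l₀ < δ → ∀ x ∈ B,
        dist (S l t x) (S l₀ t x) < ε) :
    ∃ Λs ∈ residual Λ, Dense Λs ∧
      ∀ l₀ ∈ Λs, ∀ ε : ℝ, 0 < ε → ∃ δ : ℝ, 0 < δ ∧ ∀ l : Λ, dist l l₀ < δ →
        hausdorffDist (A l) (A l₀) < ε := by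
  let F : Λ → Closeds X := fun l => ⟨A l, (hA l).1.isClosed⟩
  let f : ℕ → Λ → Closeds X := fun n l => Closeds.closure (S l (n + 1) '' D)
  have hunif : ∀ (n : ℕ) l₀, TendstoUniformlyOn (S · (n + 1)) (S l₀ (n + 1)) (𝓝 l₀) D :=
    fun n l₀ => tendstoUniformlyOn_iff.2 fun ε hε => by
      obtain ⟨δ, hδ, h⟩ := hG3 (n + 1) n.cast_add_one_pos D hD l₀ ε hε
      exact Metric.eventually_nhds_iff.2
        ⟨δ, hδ, fun l hl x hx => dist_comm (S l₀ _ x) _ ▸ h l hl x hx⟩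
  have hf : ∀ n, Continuous (f n) := fun n =>
    continuous_iff_continuousAt.2 fun l₀ => (hunif n l₀).tendsto_closure_image
  have hF : ∀ l, Tendsto (f · l) atTop (𝓝 (F l)) := fun l => by
    refine tendsto_iff_edist_tendsto_0.2 ?_
    simp only [f, F, Closeds.edist_eq, Closeds.coe_closure, hausdorffEDist_closure_left]
    exact ((hA l).tendsto_hausdorffEDist_image hD (hAD l)).comp
      (tendsto_atTop_add_const_right _ 1 tendsto_natCast_atTop_atTop)
  have hres := eventually_residual_continuousAt_of_tendsto hf hF
  refine ⟨{l | ContinuousAt F l}, hres, dense_of_mem_residual hres, fun l₀ hl₀ ε hε => ?_⟩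
  obtain ⟨δ, hδ, h⟩ := Metric.eventually_nhds_iff.1
    (EMetric.tendsto_nhds.1 hl₀ _ (ENNReal.ofReal_pos.2 hε))
  exact ⟨δ, hδ, fun l hl => ENNReal.toReal_lt_of_lt_ofReal (h hl)⟩

/-- Residual continuity of global attractors under (G1)–(G3); in particular the set
of continuity points is dense. -/
theorem stmt3 {Λ X : Type*} [MetricSpace Λ] [CompleteSpace Λ]
    [MetricSpace X] [CompleteSpace X]
    (S : Λ → ℝ → X → X)
    -- each `S l` is a semigroup
    (hid : ∀ l : Λ, S l 0 = id)
    (hsg : ∀ l : Λ, ∀ t ≥ (0 : ℝ), ∀ s ≥ (0 : ℝ), S l (t + s) = S l t ∘ S l s)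
    (hcont : ∀ l : Λ, ContinuousOn (fun p : ℝ × X => S l p.1 p.2) {p : ℝ × X | 0 ≤ p.1})
    -- (G1): global attractors
    (A : Λ → Set X) (hA : ∀ l : Λ, IsGlobalAttractor (S l) (A l))
    -- (G2): a common bounded set containing all attractors
    (D : Set X) (hD : IsBounded D) (hAD : ∀ l : Λ, A l ⊆ D)
    -- (G3): continuity in `λ`, uniformly for `x` in bounded sets
    (hG3 : ∀ t : ℝ, 0 < t → ∀ B : Set X, IsBounded B → ∀ l₀ : Λ, ∀ ε : ℝ, 0 < ε →
      ∃ δ : ℝ, 0 < δ ∧ ∀ l : Λ, dist l l₀ < δ → ∀ x ∈ B,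
        dist (S l t x) (S l₀ t x) < ε) :
    ∃ Λs ∈ residual Λ, Dense Λs ∧
      ∀ l₀ ∈ Λs, ∀ ε : ℝ, 0 < ε → ∃ δ : ℝ, 0 < δ ∧ ∀ l : Λ, dist l l₀ < δ →
        hausdorffDist (A l) (A l₀) < ε :=
  stmt3_general S A hA D hD hAD hG3
end

section
/- Let Λ and X be complete metric spaces and let S_λ(·), λ ∈ Λ, be a parameterized family of semigroups on X. Assume: (G1) each S_λ(·) has a global attractor 𝒜_λ; (G2′) there is a compact subset D of X with 𝒜_λ ⊆ D for every λ ∈ Λ; and (G3′) for each t > 0, the map λ ↦ S_λ(t)x is continuous, uniformly for x in compact subsets of X. Then there is a residual subset Λ_* of Λ such that the map λ ↦ 𝒜_λ, from Λ into the nonempty closed bounded subsets of X with the Hausdorff metric, is continuous at every λ₀ ∈ Λ_*. -/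
open Filter Topology Metric Bornology

/-- A lower semicontinuous (in `ε`-`δ` form) real function on a metric Baire space is
"upper continuous" at every point of a residual set. -/
lemma lsc_upper_residual {Λ : Type*} [MetricSpace Λ] [BaireSpace Λ] (f : Λ → ℝ)
    (hf : ∀ l₀ : Λ, ∀ ε : ℝ, 0 < ε → ∃ δ : ℝ, 0 < δ ∧ ∀ l : Λ, dist l l₀ < δ → f l₀ - ε < f l) :
    ∃ R ∈ residual Λ, ∀ l₀ ∈ R, ∀ ε : ℝ, 0 < ε →
      ∃ δ : ℝ, 0 < δ ∧ ∀ l : Λ, dist l l₀ < δ → f l < f l₀ + ε := by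
  classical
  set Dqr : ℚ × ℚ → Set Λ := fun p =>
    {l | f l ≤ (p.1 : ℝ)} ∩ closure {l | (p.2 : ℝ) ≤ f l} with hDqr
  have hclosed : ∀ q : ℚ, IsClosed {l : Λ | f l ≤ (q : ℝ)} := by
    intro q
    rw [← isOpen_compl_iff, Metric.isOpen_iff]
    intro l₀ hl₀
    simp only [Set.mem_compl_iff, Set.mem_setOf_eq, not_le] at hl₀
    obtain ⟨δ, hδ, hδ'⟩ := hf l₀ (f l₀ - q) (by linarith)
    refine ⟨δ, hδ, fun l hl => ?_⟩
    have := hδ' l (by rwa [Metric.mem_ball] at hl)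
    simp only [Set.mem_compl_iff, Set.mem_setOf_eq, not_le]
    linarith
  have hmem : ∀ p : {p : ℚ × ℚ // (p.1 : ℝ) < (p.2 : ℝ)}, (Dqr p.1)ᶜ ∈ residual Λ := by
    rintro ⟨⟨q, r⟩, hqr⟩
    rw [mem_residual]
    refine ⟨(Dqr (q, r))ᶜ, subset_rfl, IsOpen.isGδ ?_, ?_⟩
    · rw [isOpen_compl_iff]
      exact (hclosed q).inter isClosed_closure
    · rw [dense_iff_inter_open]
      rintro U hU ⟨x, hx⟩
      by_contra hcon
      have hUD : U ⊆ Dqr (q, r) := fun y hy => by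
        by_contra hy'
        exact hcon ⟨y, hy, hy'⟩
      have hx' := hUD hx
      obtain ⟨y, hyU, hyr⟩ := _root_.mem_closure_iff.1 hx'.2 U hU hx
      have h1 : f y ≤ (q : ℝ) := (hUD hyU).1
      have h2 : (r : ℝ) ≤ f y := hyr
      linarith
  refine ⟨⋂ p : {p : ℚ × ℚ // (p.1 : ℝ) < (p.2 : ℝ)}, (Dqr p.1)ᶜ,
    countable_iInter_mem.2 hmem, ?_⟩
  intro l₀ hl₀ ε hε
  obtain ⟨q, hq1, hq2⟩ := exists_rat_btwn (show f l₀ < f l₀ + ε / 2 by linarith)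
  obtain ⟨r, hr1, hr2⟩ := exists_rat_btwn (show (q : ℝ) < f l₀ + ε by linarith)
  have hl₀' : l₀ ∉ Dqr (q, r) := Set.mem_iInter.1 hl₀ ⟨(q, r), hr1⟩
  have hnotcl : l₀ ∉ closure {l : Λ | (r : ℝ) ≤ f l} := fun hc =>
    hl₀' ⟨le_of_lt hq1, hc⟩
  obtain ⟨δ, hδ, hball⟩ :=
    Metric.isOpen_iff.1 isClosed_closure.isOpen_compl l₀ hnotcl
  refine ⟨δ, hδ, fun l hl => ?_⟩
  have h1 : l ∉ closure {l : Λ | (r : ℝ) ≤ f l} := hball (by rwa [Metric.mem_ball])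
  have h2 : ¬ ((r : ℝ) ≤ f l) := fun h => h1 (subset_closure h)
  linarith

/-- Residual continuity of global attractors under (G1), (G2′), (G3′). -/
theorem stmt4 {Λ X : Type*} [MetricSpace Λ] [CompleteSpace Λ]
    [MetricSpace X] [CompleteSpace X]
    (S : Λ → ℝ → X → X)
    -- each `S l` is a semigroup
    (hid : ∀ l : Λ, S l 0 = id)
    (hsg : ∀ l : Λ, ∀ t ≥ (0 : ℝ), ∀ s ≥ (0 : ℝ), S l (t + s) = S l t ∘ S l s)
    (hcont : ∀ l : Λ, ContinuousOn (fun p : ℝ × X => S l p.1 p.2) {p : ℝ × X | 0 ≤ p.1})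
    -- (G1): global attractors
    (A : Λ → Set X) (hA : ∀ l : Λ, IsGlobalAttractor (S l) (A l))
    -- (G2′): a common compact set containing all attractors
    (D : Set X) (hD : IsCompact D) (hAD : ∀ l : Λ, A l ⊆ D)
    -- (G3′): continuity in `λ`, uniformly for `x` in compact sets
    (hG3' : ∀ t : ℝ, 0 < t → ∀ C : Set X, IsCompact C → ∀ l₀ : Λ, ∀ ε : ℝ, 0 < ε →
      ∃ δ : ℝ, 0 < δ ∧ ∀ l : Λ, dist l l₀ < δ → ∀ x ∈ C,
        dist (S l t x) (S l₀ t x) < ε) :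
    ∃ Λs ∈ residual Λ,
      ∀ l₀ ∈ Λs, ∀ ε : ℝ, 0 < ε → ∃ δ : ℝ, 0 < δ ∧ ∀ l : Λ, dist l l₀ < δ →
        hausdorffDist (A l) (A l₀) < ε := by
  classical
  -- Upper semicontinuity of the attractors, everywhere.
  have usc : ∀ l₀ : Λ, ∀ ε : ℝ, 0 < ε → ∃ δ : ℝ, 0 < δ ∧ ∀ l : Λ, dist l l₀ < δ →
      ∀ a ∈ A l, infDist a (A l₀) < ε := by
    intro l₀ ε hε
    obtain ⟨T, hT⟩ := (hA l₀).2.2.2 D hD.isBounded (ε / 2) (by positivity)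
    set t := max T 1 with ht
    have ht0 : (0 : ℝ) < t := lt_of_lt_of_le one_pos (le_max_right _ _)
    obtain ⟨δ, hδ, hδ'⟩ := hG3' t ht0 D hD l₀ (ε / 2) (by positivity)
    refine ⟨δ, hδ, fun l hl a ha => ?_⟩
    rw [← (hA l).2.2.1 t ht0.le] at ha
    obtain ⟨x, hx, rfl⟩ := ha
    have hxD : x ∈ D := hAD l hx
    have h1 : dist (S l t x) (S l₀ t x) < ε / 2 := hδ' l hl x hxD
    have h2 : infDist (S l₀ t x) (A l₀) < ε / 2 :=
      ENNReal.toReal_lt_of_lt_ofReal (hT t (le_max_left _ _) x hxD)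
    calc infDist (S l t x) (A l₀)
        ≤ infDist (S l₀ t x) (A l₀) + dist (S l t x) (S l₀ t x) :=
          infDist_le_infDist_add_dist
      _ < ε / 2 + ε / 2 := by linarith
      _ = ε := by ring
  -- A countable dense subset of `D`.
  obtain ⟨c, hc_count, hc_sub⟩ := hD.isSeparable
  -- The distance functions `l ↦ infDist x (A l)` are lower semicontinuous.
  have hlsc : ∀ x : X, ∀ l₀ : Λ, ∀ ε : ℝ, 0 < ε → ∃ δ : ℝ, 0 < δ ∧ ∀ l : Λ,
      dist l l₀ < δ → infDist x (A l₀) - ε < infDist x (A l) := by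
    intro x l₀ ε hε
    obtain ⟨δ, hδ, hδ'⟩ := usc l₀ (ε / 2) (by positivity)
    refine ⟨δ, hδ, fun l hl => ?_⟩
    have hlow : ∀ a ∈ A l, infDist x (A l₀) - ε / 2 ≤ dist x a := by
      intro a ha
      have := hδ' l hl a ha
      have htri : infDist x (A l₀) ≤ infDist a (A l₀) + dist x a :=
        infDist_le_infDist_add_dist
      linarith
    by_contra hcon
    push_neg at hcon
    have hlt : infDist x (A l) < infDist x (A l₀) - ε / 2 :=
      lt_of_le_of_lt hcon (by linarith)
    obtain ⟨a, ha, hda⟩ := (infDist_lt_iff (hA l).2.1).1 hlt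
    exact absurd hda (not_lt.2 (hlow a ha))
  -- Residual sets of upper-continuity points for each `x` in the dense set.
  have H : ∀ x : X, ∃ R ∈ residual Λ, ∀ l₀ ∈ R, ∀ ε : ℝ, 0 < ε →
      ∃ δ : ℝ, 0 < δ ∧ ∀ l : Λ, dist l l₀ < δ →
        infDist x (A l) < infDist x (A l₀) + ε :=
    fun x => lsc_upper_residual (fun l => infDist x (A l)) (hlsc x)
  choose R hRmem hRprop using H
  refine ⟨⋂ x ∈ c, R x, (countable_bInter_mem hc_count).2 fun x _ => hRmem x, ?_⟩
  intro l₀ hl₀ ε hε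
  have hAne : (A l₀).Nonempty := (hA l₀).2.1
  -- upper semicontinuity part, as an eventually statement
  have husc : ∀ᶠ l in 𝓝 l₀, ∀ a ∈ A l, infDist a (A l₀) < ε / 2 := by
    obtain ⟨δ, hδ, hδ'⟩ := usc l₀ (ε / 2) (by positivity)
    exact Metric.eventually_nhds_iff.2 ⟨δ, hδ, fun l hl => hδ' l hl⟩
  -- cover `A l₀` by finitely many small balls centered in `A l₀`
  obtain ⟨F, hFsub, hFcover⟩ := (hA l₀).1.elim_nhds_subcover
    (fun a => Metric.ball a (ε / 16)) (fun a _ => Metric.ball_mem_nhds a (by positivity))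
  -- pick nearby points of the countable dense set
  have hx : ∀ a ∈ A l₀, ∃ x ∈ c, dist a x < ε / 16 := by
    intro a ha
    exact Metric.mem_closure_iff.1 (hc_sub (hAD l₀ ha)) (ε / 16) (by positivity)
  choose! x hxc hxd using hx
  -- lower semicontinuity part, as an eventually statement
  have hlscF : ∀ᶠ l in 𝓝 l₀, ∀ a ∈ F, infDist (x a) (A l) < ε / 8 := by
    rw [Finset.eventually_all]
    intro a haF
    have haA : a ∈ A l₀ := hFsub a haF
    have hl₀R : l₀ ∈ R (x a) := by
      have := Set.mem_iInter.1 hl₀ (x a)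
      exact Set.mem_iInter.1 this (hxc a haA)
    obtain ⟨δ, hδ, hδ'⟩ := hRprop (x a) l₀ hl₀R (ε / 16) (by positivity)
    refine Metric.eventually_nhds_iff.2 ⟨δ, hδ, fun l hl => ?_⟩
    have h1 : infDist (x a) (A l₀) ≤ dist (x a) a := infDist_le_dist_of_mem haA
    have h2 := hδ' l hl
    have h3 : dist (x a) a < ε / 16 := by rw [dist_comm]; exact hxd a haA
    linarith
  obtain ⟨δ, hδ, hδ'⟩ := Metric.eventually_nhds_iff.1 (husc.and hlscF)
  refine ⟨δ, hδ, fun l hl => ?_⟩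
  obtain ⟨h1, h2⟩ := hδ' hl
  have hbd : hausdorffDist (A l) (A l₀) ≤ ε / 2 := by
    apply hausdorffDist_le_of_infDist (by positivity)
    · exact fun a ha => (h1 a ha).le
    · intro b hb
      obtain ⟨a, haF, hba⟩ := Set.mem_iUnion₂.1 (hFcover hb)
      have haA : a ∈ A l₀ := hFsub a haF
      have hinf : infDist (x a) (A l) < ε / 8 := h2 a haF
      have htri : infDist b (A l) ≤ infDist (x a) (A l) + dist b (x a) :=
        infDist_le_infDist_add_dist
      have hdb : dist b (x a) ≤ dist b a + dist a (x a) := dist_triangle _ _ _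
      have hba' : dist b a < ε / 16 := Metric.mem_ball.1 hba
      have hax : dist a (x a) < ε / 16 := hxd a haA
      linarith
  linarith
end

section
/- Let Λ and X be complete metric spaces, let S_λ(·,·), λ ∈ Λ, be a family of processes on X, and let K be a compact subset of X. Assume that for every s ∈ ℝ and t ≥ s the map λ ↦ S_λ(t,s)x is continuous, uniformly for x in compact subsets of X. Then for every s ∈ ℝ and t ≥ s, the mapping (λ, B) ↦ S_λ(t,s)B is jointly continuous on Λ × CB(K), where CB(K) is the space of nonempty closed (hence compact) subsets of K with the Hausdorff metric, and the image S_λ(t,s)B is taken as an element of the nonempty compact subsets of X with the Hausdorff metric. -/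
open Filter Topology Metric Bornology

/-!
For `x ∈ B` and `y ∈ B₀` close to each other,
`d(S_λ x, S_λ₀ y) ≤ d(S_λ x, S_λ₀ x) + d(S_λ₀ x, S_λ₀ y)`: the first term is small uniformly on
`K` by hypothesis, the second by uniform continuity of `S_λ₀(t,s)` on the compact set `K`.
Matching every point of `B` with a nearby point of `B₀` and vice versa then bounds the
Hausdorff distance of the images.
-/

/-- A process on a metric space `X`: a two-parameter family `S t s : X → X` (`t ≥ s`)
with `S t t = id`, `S t τ ∘ S τ s = S t s` for `t ≥ τ ≥ s`, and `(t, s, x) ↦ S t s x`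
continuous on the region `s ≤ t`. -/
def IsProcess {X : Type*} [MetricSpace X] (S : ℝ → ℝ → X → X) : Prop :=
  (∀ t : ℝ, S t t = id) ∧
  (∀ t τ s : ℝ, s ≤ τ → τ ≤ t → S t τ ∘ S τ s = S t s) ∧
  ContinuousOn (fun p : ℝ × ℝ × X => S p.1 p.2.1 p.2.2) {p : ℝ × ℝ × X | p.2.1 ≤ p.1}

theorem IsProcess.continuous_apply {X : Type*} [MetricSpace X] {S : ℝ → ℝ → X → X}
    (hS : IsProcess S) {s t : ℝ} (hst : s ≤ t) : Continuous (S t s) := by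
  have hmaps : Set.MapsTo (fun x : X => ((t, s, x) : ℝ × ℝ × X)) Set.univ
      {p : ℝ × ℝ × X | p.2.1 ≤ p.1} := fun _ _ => hst
  exact continuousOn_univ.mp (hS.2.2.comp (by fun_prop) hmaps)

theorem hausdorffDist_image_le_of_forall_dist_lt {X Y : Type*} [PseudoMetricSpace X]
    [PseudoMetricSpace Y] {A B : Set X} {f g : X → Y} {δ r : ℝ} (hr : 0 ≤ r)
    (hfin : hausdorffEDist A B ≠ ⊤) (hAB : hausdorffDist A B < δ)
    (hfg : ∀ x ∈ A, ∀ y ∈ B, dist x y < δ → dist (f x) (g y) ≤ r) :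
    hausdorffDist (f '' A) (g '' B) ≤ r := by
  apply hausdorffDist_le_of_mem_dist hr
  · rintro _ ⟨x, hx, rfl⟩
    obtain ⟨y, hy, hxy⟩ := exists_dist_lt_of_hausdorffDist_lt hx hAB hfin
    exact ⟨g y, Set.mem_image_of_mem g hy, hfg x hx y hy hxy⟩
  · rintro _ ⟨y, hy, rfl⟩
    obtain ⟨x, hx, hyx⟩ := exists_dist_lt_of_hausdorffDist_lt' hy hAB hfin
    exact ⟨f x, Set.mem_image_of_mem f hx, dist_comm (g y) (f x) ▸ hfg x hx y hy hyx⟩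

theorem stmt6_general {Λ X : Type*} [MetricSpace Λ]
    [MetricSpace X]
    (S : Λ → ℝ → ℝ → X → X) (hproc : ∀ l : Λ, IsProcess (S l))
    (K : Set X) (hK : IsCompact K)
    (hL3' : ∀ s t : ℝ, s ≤ t → ∀ C : Set X, IsCompact C → ∀ l₀ : Λ, ∀ ε : ℝ, 0 < ε →
      ∃ δ : ℝ, 0 < δ ∧ ∀ l : Λ, dist l l₀ < δ → ∀ x ∈ C,
        dist (S l t s x) (S l₀ t s x) < ε) :
    ∀ s t : ℝ, s ≤ t →
      ∀ (l₀ : Λ) (B₀ : Set X), IsClosed B₀ → B₀.Nonempty → B₀ ⊆ K →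
        ∀ ε : ℝ, 0 < ε → ∃ δ : ℝ, 0 < δ ∧
          ∀ (l : Λ) (B : Set X), IsClosed B → B.Nonempty → B ⊆ K →
            dist l l₀ < δ → hausdorffDist B B₀ < δ →
            hausdorffDist (S l t s '' B) (S l₀ t s '' B₀) < ε := by
  intro s t hst l₀ B₀ _ hB₀ne hB₀K ε hε
  have hε3 : 0 < ε / 3 := by linarith
  have hunif : UniformContinuousOn (S l₀ t s) K :=
    hK.uniformContinuousOn_of_continuous ((hproc l₀).continuous_apply hst).continuousOn
  obtain ⟨δ₁, hδ₁, hcont⟩ := Metric.uniformContinuousOn_iff.mp hunif (ε / 3) hε3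
  obtain ⟨δ₂, hδ₂, hclose⟩ := hL3' s t hst K hK l₀ (ε / 3) hε3
  refine ⟨min δ₁ δ₂, lt_min hδ₁ hδ₂, fun l B _ hBne hBK hl hB => ?_⟩
  have hfin : hausdorffEDist B B₀ ≠ ⊤ :=
    hausdorffEDist_ne_top_of_nonempty_of_bounded hBne hB₀ne
      (hK.isBounded.subset hBK) (hK.isBounded.subset hB₀K)
  have himage : hausdorffDist (S l t s '' B) (S l₀ t s '' B₀) ≤ 2 * (ε / 3) := by
    refine hausdorffDist_image_le_of_forall_dist_lt (by positivity) hfin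
      (hB.trans_le (min_le_left _ _)) fun x hx y hy hxy => ?_
    have h₁ := hclose l (hl.trans_le (min_le_right _ _)) x (hBK hx)
    have h₂ := hcont x (hBK hx) y (hB₀K hy) hxy
    linarith [dist_triangle (S l t s x) (S l₀ t s x) (S l₀ t s y)]
  linarith

/-- Joint continuity of `(λ, B) ↦ S_λ(t,s)B` on `Λ × CB(K)` for a compact `K ⊆ X`,
where `CB(K)` is the collection of nonempty closed subsets of `K` with the Hausdorff
metric, assuming `λ ↦ S_λ(t,s)x` is continuous uniformly for `x` in compact sets. -/
theorem stmt6 {Λ X : Type*} [MetricSpace Λ] [CompleteSpace Λ]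
    [MetricSpace X] [CompleteSpace X]
    (S : Λ → ℝ → ℝ → X → X) (hproc : ∀ l : Λ, IsProcess (S l))
    (K : Set X) (hK : IsCompact K)
    (hL3' : ∀ s t : ℝ, s ≤ t → ∀ C : Set X, IsCompact C → ∀ l₀ : Λ, ∀ ε : ℝ, 0 < ε →
      ∃ δ : ℝ, 0 < δ ∧ ∀ l : Λ, dist l l₀ < δ → ∀ x ∈ C,
        dist (S l t s x) (S l₀ t s x) < ε) :
    ∀ s t : ℝ, s ≤ t →
      ∀ (l₀ : Λ) (B₀ : Set X), IsClosed B₀ → B₀.Nonempty → B₀ ⊆ K →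
        ∀ ε : ℝ, 0 < ε → ∃ δ : ℝ, 0 < δ ∧
          ∀ (l : Λ) (B : Set X), IsClosed B → B.Nonempty → B ⊆ K →
            dist l l₀ < δ → hausdorffDist B B₀ < δ →
            hausdorffDist (S l t s '' B) (S l₀ t s '' B₀) < ε :=
  stmt6_general S hproc K hK hL3'
end

section
/- Let Λ and X be complete metric spaces and let S_λ(·,·), λ ∈ Λ, be a family of processes on X. Assume: (L1) each S_λ has a pullback attractor 𝒜_λ(·); (L2′) there is a compact subset D of X with 𝒜_λ(t) ⊆ D for every λ ∈ Λ and every t ∈ ℝ; and (L3′) for every s ∈ ℝ and t ≥ s the map λ ↦ S_λ(t,s)x is continuous, uniformly for x in compact subsets of X. Then there exists a residual set Λ_* ⊆ Λ such that for every t ∈ ℝ the function λ ↦ 𝒜_λ(t), into the nonempty compact subsets of X with the Hausdorff metric, is continuous at each λ ∈ Λ_*. -/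
open Filter Topology Metric Bornology

/-- The family `A(·)` is pullback attracting for the process `S`:
for every bounded `B` and every `t`, `ρ_X(S(t,s)B, A(t)) → 0` as `s → −∞`. -/
def PullbackAttracts {X : Type*} [MetricSpace X] (S : ℝ → ℝ → X → X) (A : ℝ → Set X) :
    Prop :=
  ∀ B : Set X, IsBounded B → ∀ t : ℝ, ∀ ε : ℝ, 0 < ε → ∃ s₀ : ℝ, ∀ s ≤ s₀, ∀ x ∈ B,
    EMetric.infEdist (S t s x) (A t) < ENNReal.ofReal ε

/-- A pullback attractor for the process `S`: a family of compact sets that is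
invariant, pullback attracting, and minimal among such families. -/
def IsPullbackAttractor {X : Type*} [MetricSpace X] (S : ℝ → ℝ → X → X)
    (A : ℝ → Set X) : Prop :=
  (∀ t : ℝ, IsCompact (A t)) ∧
  (∀ t s : ℝ, s ≤ t → S t s '' A s = A t) ∧
  PullbackAttracts S A ∧
  (∀ C : ℝ → Set X, (∀ t : ℝ, IsCompact (C t)) →
    (∀ t s : ℝ, s ≤ t → S t s '' C s = C t) → PullbackAttracts S C →
    ∀ t : ℝ, A t ⊆ C t)

/-- Fort-type lemma: for a compactly-bounded, upper semicontinuous set-valued map `F`,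
the set of points where lower semicontinuity fails by at least `ε` is nowhere dense. -/
lemma fort_nwd {Λ X : Type*} [MetricSpace Λ] [MetricSpace X]
    (F : Λ → Set X) (D : Set X) (hD : IsCompact D) (hFD : ∀ l, F l ⊆ D)
    (husc : ∀ l₀ : Λ, ∀ ε : ℝ, 0 < ε → ∃ δ : ℝ, 0 < δ ∧ ∀ l, dist l l₀ < δ →
      ∀ y ∈ F l, EMetric.infEdist y (F l₀) ≤ ENNReal.ofReal ε)
    (ε : ℝ) (hε : 0 < ε) :
    interior (closure {l₀ : Λ | ∀ δ : ℝ, 0 < δ → ∃ l, dist l l₀ < δ ∧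
      ∃ x ∈ F l₀, ENNReal.ofReal ε ≤ EMetric.infEdist x (F l)}) = ∅ := by
  set E : Set Λ := {l₀ : Λ | ∀ δ : ℝ, 0 < δ → ∃ l, dist l l₀ < δ ∧
      ∃ x ∈ F l₀, ENNReal.ofReal ε ≤ EMetric.infEdist x (F l)} with hE
  by_contra hne
  obtain ⟨c₀, hc₀⟩ := Set.nonempty_iff_ne_empty.2 hne
  obtain ⟨r₀, hr₀, hsub₀⟩ := Metric.mem_nhds_iff.1 (mem_interior_iff_mem_nhds.1 hc₀)
  -- the one-step construction
  have step : ∀ c : Λ, ∀ ρ : ℝ, (0 < ρ ∧ ball c ρ ⊆ closure E) →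
      ∃ (x : X) (c' : Λ) (ρ' : ℝ), (0 < ρ' ∧ ball c' ρ' ⊆ closure E) ∧ x ∈ D ∧
        (∃ l ∈ ball c ρ, x ∈ F l) ∧ ball c' ρ' ⊆ ball c ρ ∧
        ∀ l ∈ ball c' ρ', ∀ y ∈ F l, ε / 2 < dist x y := by
    intro c ρ ⟨hρ, hsub⟩
    have hcE : c ∈ closure E := hsub (mem_ball_self hρ)
    obtain ⟨l₁, hl₁E, hl₁⟩ := Metric.mem_closure_iff.1 hcE (ρ / 2) (by linarith)
    obtain ⟨l₂, hl₂, x, hxF, hxe⟩ := hl₁E (ρ / 4) (by linarith)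
    obtain ⟨δ₂, hδ₂, H₂⟩ := husc l₂ (ε / 8) (by linarith)
    refine ⟨x, l₂, min δ₂ (ρ / 8), ?_, hFD l₁ hxF, ⟨l₁, ?_, hxF⟩, ?_, ?_⟩
    · constructor
      · exact lt_min hδ₂ (by linarith)
      · intro l hl
        apply hsub
        rw [mem_ball] at hl ⊢
        have h1 : dist l l₂ < ρ / 8 := lt_of_lt_of_le hl (min_le_right _ _)
        have h3 : dist l₁ c < ρ / 2 := by rwa [dist_comm]
        calc dist l c ≤ dist l l₂ + dist l₂ l₁ + dist l₁ c := dist_triangle4 l l₂ l₁ c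
          _ < ρ := by linarith
    · rw [mem_ball, dist_comm]; linarith
    · intro l hl
      rw [mem_ball] at hl ⊢
      have h1 : dist l l₂ < ρ / 8 := lt_of_lt_of_le hl (min_le_right _ _)
      have h3 : dist l₁ c < ρ / 2 := by rwa [dist_comm]
      calc dist l c ≤ dist l l₂ + dist l₂ l₁ + dist l₁ c := dist_triangle4 l l₂ l₁ c
        _ < ρ := by linarith
    · intro l hl y hy
      have hld : dist l l₂ < δ₂ := lt_of_lt_of_le (mem_ball.1 hl) (min_le_left _ _)
      have h1 : EMetric.infEdist y (F l₂) < ENNReal.ofReal (ε / 4) :=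
        lt_of_le_of_lt (H₂ l hld y hy)
          ((ENNReal.ofReal_lt_ofReal_iff (by linarith)).2 (by linarith))
      obtain ⟨z, hzF, hz⟩ := EMetric.infEdist_lt_iff.1 h1
      have hyz : dist y z < ε / 4 := edist_lt_ofReal.1 hz
      have hxz : ε ≤ dist x z := by
        have := le_trans hxe (EMetric.infEdist_le_edist_of_mem hzF)
        rw [edist_dist] at this
        exact (ENNReal.ofReal_le_ofReal_iff dist_nonneg).1 this
      have htri : dist x z ≤ dist x y + dist y z := dist_triangle x y z
      linarith
  choose xf cf rf hInv hxD hxmem hballsub hQ using step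
  -- build the recursive sequence of nested balls
  let seq : ℕ → {p : Λ × ℝ // 0 < p.2 ∧ ball p.1 p.2 ⊆ closure E} := fun n =>
    Nat.rec ⟨(c₀, r₀), hr₀, hsub₀⟩
      (fun _ q => ⟨(cf q.1.1 q.1.2 q.2, rf q.1.1 q.1.2 q.2), hInv q.1.1 q.1.2 q.2⟩) n
  let x : ℕ → X := fun n => xf (seq n).1.1 (seq n).1.2 (seq n).2
  have hx_D : ∀ n, x n ∈ D := fun n => hxD (seq n).1.1 (seq n).1.2 (seq n).2
  have hstep_sub : ∀ n, ball (seq (n + 1)).1.1 (seq (n + 1)).1.2 ⊆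
      ball (seq n).1.1 (seq n).1.2 := fun n => hballsub (seq n).1.1 (seq n).1.2 (seq n).2
  have hmono : ∀ n m, n ≤ m → ball (seq m).1.1 (seq m).1.2 ⊆
      ball (seq n).1.1 (seq n).1.2 := by
    intro n m hnm
    induction m, hnm using Nat.le_induction with
    | base => exact subset_rfl
    | succ m hnm ih => exact (hstep_sub m).trans ih
  have hQn : ∀ n, ∀ l ∈ ball (seq (n + 1)).1.1 (seq (n + 1)).1.2, ∀ y ∈ F l,
      ε / 2 < dist (x n) y := fun n => hQ (seq n).1.1 (seq n).1.2 (seq n).2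
  have hsep : ∀ i j, i < j → ε / 2 < dist (x i) (x j) := by
    intro i j hij
    obtain ⟨l, hl, hxl⟩ := hxmem (seq j).1.1 (seq j).1.2 (seq j).2
    exact hQn i l (hmono (i + 1) j hij hl) (x j) hxl
  obtain ⟨a, -, φ, hφmono, hφtend⟩ := hD.tendsto_subseq hx_D
  obtain ⟨N, hN⟩ := (Metric.tendsto_atTop.1 hφtend) (ε / 4) (by linarith)
  have h1 := hN N le_rfl
  have h2 := hN (N + 1) (Nat.le_succ N)
  have hlt : φ N < φ (N + 1) := hφmono (Nat.lt_succ_self N)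
  have := hsep (φ N) (φ (N + 1)) hlt
  have htri : dist (x (φ N)) (x (φ (N + 1))) ≤
      dist (x (φ N)) a + dist (x (φ (N + 1))) a := dist_triangle_right _ _ _
  simp only [Function.comp_apply] at h1 h2
  linarith

/-- Fort's theorem: an upper semicontinuous compactly-bounded set-valued map is
lower semicontinuous on a residual set. -/
lemma fort_residual {Λ X : Type*} [MetricSpace Λ] [MetricSpace X]
    (F : Λ → Set X) (D : Set X) (hD : IsCompact D) (hFD : ∀ l, F l ⊆ D)
    (husc : ∀ l₀ : Λ, ∀ ε : ℝ, 0 < ε → ∃ δ : ℝ, 0 < δ ∧ ∀ l, dist l l₀ < δ →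
      ∀ y ∈ F l, EMetric.infEdist y (F l₀) ≤ ENNReal.ofReal ε) :
    ∃ R ∈ residual Λ, ∀ l₀ ∈ R, ∀ ε : ℝ, 0 < ε → ∃ δ : ℝ, 0 < δ ∧ ∀ l, dist l l₀ < δ →
      ∀ x ∈ F l₀, EMetric.infEdist x (F l) < ENNReal.ofReal ε := by
  set E : ℝ → Set Λ := fun e => {l₀ : Λ | ∀ δ : ℝ, 0 < δ → ∃ l, dist l l₀ < δ ∧
      ∃ x ∈ F l₀, ENNReal.ofReal e ≤ EMetric.infEdist x (F l)} with hEdef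
  refine ⟨⋂ n : ℕ, (closure (E (1 / (n + 1 : ℝ))))ᶜ, ?_, ?_⟩
  · refine countable_iInter_mem.2 fun n => ?_
    refine residual_of_dense_open isClosed_closure.isOpen_compl ?_
    rw [← interior_eq_empty_iff_dense_compl]
    exact fort_nwd F D hD hFD husc _ (by positivity)
  · intro l₀ hl₀ ε hε
    obtain ⟨n, hn⟩ := exists_nat_one_div_lt hε
    have hl₀n : l₀ ∉ E (1 / (n + 1 : ℝ)) := fun h =>
      (Set.mem_iInter.1 hl₀ n) (subset_closure h)
    rw [hEdef, Set.mem_setOf_eq] at hl₀n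
    push_neg at hl₀n
    obtain ⟨δ, hδ, hgood⟩ := hl₀n
    refine ⟨δ, hδ, fun l hl xx hxx => ?_⟩
    exact lt_of_lt_of_le (hgood l hl xx hxx) (ENNReal.ofReal_le_ofReal hn.le)

/-- Upper semicontinuity of the attractors, at every parameter. -/
lemma usc_attr {Λ X : Type*} [MetricSpace Λ] [MetricSpace X]
    (S : Λ → ℝ → ℝ → X → X)
    (A : Λ → ℝ → Set X) (hA : ∀ l : Λ, IsPullbackAttractor (S l) (A l))
    (D : Set X) (hD : IsCompact D) (hAD : ∀ (l : Λ) (t : ℝ), A l t ⊆ D)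
    (hL3' : ∀ s t : ℝ, s ≤ t → ∀ C : Set X, IsCompact C → ∀ l₀ : Λ, ∀ ε : ℝ, 0 < ε →
      ∃ δ : ℝ, 0 < δ ∧ ∀ l : Λ, dist l l₀ < δ → ∀ x ∈ C,
        dist (S l t s x) (S l₀ t s x) < ε)
    (t : ℝ) (l₀ : Λ) (ε : ℝ) (hε : 0 < ε) :
    ∃ δ : ℝ, 0 < δ ∧ ∀ l, dist l l₀ < δ →
      ∀ y ∈ A l t, EMetric.infEdist y (A l₀ t) ≤ ENNReal.ofReal ε := by
  obtain ⟨s₀, hs₀⟩ := (hA l₀).2.2.1 D hD.isBounded t (ε / 2) (by linarith)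
  set s : ℝ := min s₀ t with hs
  have hst : s ≤ t := min_le_right _ _
  obtain ⟨δ, hδ, hLip⟩ := hL3' s t hst D hD l₀ (ε / 2) (by linarith)
  refine ⟨δ, hδ, fun l hl y hy => ?_⟩
  rw [← (hA l).2.1 t s hst] at hy
  obtain ⟨xx, hx, rfl⟩ := hy
  have hxD : xx ∈ D := hAD l s hx
  calc EMetric.infEdist (S l t s xx) (A l₀ t)
      ≤ edist (S l t s xx) (S l₀ t s xx) + EMetric.infEdist (S l₀ t s xx) (A l₀ t) :=
        EMetric.infEdist_le_edist_add_infEdist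
    _ ≤ ENNReal.ofReal (ε / 2) + ENNReal.ofReal (ε / 2) := by
        refine add_le_add ?_ ?_
        · exact le_of_lt (edist_lt_ofReal.2 (hLip l hl xx hxD))
        · exact (hs₀ s (min_le_left _ _) xx hxD).le
    _ = ENNReal.ofReal ε := by
        rw [← ENNReal.ofReal_add (by linarith) (by linarith)]
        norm_num
/-- Residual continuity of pullback attractors under (L1), (L2′), (L3′). -/
theorem stmt7 {Λ X : Type*} [MetricSpace Λ] [CompleteSpace Λ]
    [MetricSpace X] [CompleteSpace X]
    (S : Λ → ℝ → ℝ → X → X) (hproc : ∀ l : Λ, IsProcess (S l))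
    -- (L1): pullback attractors
    (A : Λ → ℝ → Set X) (hA : ∀ l : Λ, IsPullbackAttractor (S l) (A l))
    -- (L2′): a common compact set containing all attractors
    (D : Set X) (hD : IsCompact D) (hAD : ∀ (l : Λ) (t : ℝ), A l t ⊆ D)
    -- (L3′): continuity in `λ`, uniformly for `x` in compact sets
    (hL3' : ∀ s t : ℝ, s ≤ t → ∀ C : Set X, IsCompact C → ∀ l₀ : Λ, ∀ ε : ℝ, 0 < ε →
      ∃ δ : ℝ, 0 < δ ∧ ∀ l : Λ, dist l l₀ < δ → ∀ x ∈ C,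
        dist (S l t s x) (S l₀ t s x) < ε) :
    ∃ Λs ∈ residual Λ, ∀ l₀ ∈ Λs, ∀ t : ℝ, ∀ ε : ℝ, 0 < ε →
      ∃ δ : ℝ, 0 < δ ∧ ∀ l : Λ, dist l l₀ < δ →
        hausdorffDist (A l t) (A l₀ t) < ε := by
  have husc : ∀ τ : ℝ, ∀ l₀ : Λ, ∀ ε : ℝ, 0 < ε → ∃ δ : ℝ, 0 < δ ∧ ∀ l, dist l l₀ < δ →
      ∀ y ∈ A l τ, EMetric.infEdist y (A l₀ τ) ≤ ENNReal.ofReal ε :=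
    fun τ => usc_attr S A hA D hD hAD hL3' τ
  have hres : ∀ n : ℕ, ∃ R ∈ residual Λ, ∀ l₀ ∈ R, ∀ ε : ℝ, 0 < ε →
      ∃ δ : ℝ, 0 < δ ∧ ∀ l, dist l l₀ < δ →
      ∀ x ∈ A l₀ (-(n : ℝ)), EMetric.infEdist x (A l (-(n : ℝ))) < ENNReal.ofReal ε :=
    fun n => fort_residual (fun l => A l (-(n : ℝ))) D hD (fun l => hAD l _)
      (husc (-(n : ℝ)))
  choose R hRmem hR using hres
  refine ⟨⋂ n : ℕ, R n, countable_iInter_mem.2 hRmem, ?_⟩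
  intro l₀ hl₀ t ε hε
  obtain ⟨n, hn⟩ := exists_nat_ge (-t)
  set s : ℝ := -(n : ℝ) with hsdef
  have hst : s ≤ t := by rw [hsdef]; linarith
  -- continuity of x ↦ S l₀ t s x and uniform continuity on D
  have hc : Continuous (fun x : X => S l₀ t s x) := by
    have hco : ContinuousOn (fun p : ℝ × ℝ × X => S l₀ p.1 p.2.1 p.2.2)
        {p : ℝ × ℝ × X | p.2.1 ≤ p.1} := (hproc l₀).2.2
    have hf : Continuous (fun x : X => ((t, (s, x)) : ℝ × ℝ × X)) := by fun_prop
    exact hco.comp_continuous hf (fun x => hst)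
  obtain ⟨η, hη, hU⟩ := Metric.uniformContinuousOn_iff.1
    (hD.uniformContinuousOn_of_continuous hc.continuousOn) (ε / 8) (by linarith)
  obtain ⟨δ₂, hδ₂, hL⟩ := hL3' s t hst D hD l₀ (ε / 8) (by linarith)
  obtain ⟨δ₃, hδ₃, hUsc⟩ := husc s l₀ (η / 2) (by linarith)
  obtain ⟨δ₄, hδ₄, hLsc⟩ := hR n l₀ (Set.mem_iInter.1 hl₀ n) η hη
  refine ⟨min (min δ₂ δ₃) δ₄, by positivity, fun l hl => ?_⟩
  have hl₂ : dist l l₀ < δ₂ := lt_of_lt_of_le hl ((min_le_left _ _).trans (min_le_left _ _))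
  have hl₃ : dist l l₀ < δ₃ := lt_of_lt_of_le hl ((min_le_left _ _).trans (min_le_right _ _))
  have hl₄ : dist l l₀ < δ₄ := lt_of_lt_of_le hl (min_le_right _ _)
  have hinv_l : S l t s '' A l s = A l t := (hA l).2.1 t s hst
  have hinv_l₀ : S l₀ t s '' A l₀ s = A l₀ t := (hA l₀).2.1 t s hst
  have claim1 : ∀ z ∈ A l t, EMetric.infEdist z (A l₀ t) ≤ ENNReal.ofReal (ε / 2) := by
    intro z hz
    rw [← hinv_l] at hz
    obtain ⟨xx, hx, rfl⟩ := hz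
    have hxD : xx ∈ D := hAD l s hx
    -- get w ∈ A l₀ s with dist xx w < η
    have h1 : EMetric.infEdist xx (A l₀ s) < ENNReal.ofReal η :=
      lt_of_le_of_lt (hUsc l hl₃ xx hx)
        ((ENNReal.ofReal_lt_ofReal_iff hη).2 (by linarith))
    obtain ⟨w, hwA, hw⟩ := EMetric.infEdist_lt_iff.1 h1
    have hxw : dist xx w < η := edist_lt_ofReal.1 hw
    have hwD : w ∈ D := hAD l₀ s hwA
    have hgw : S l₀ t s w ∈ A l₀ t := hinv_l₀ ▸ Set.mem_image_of_mem _ hwA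
    have hd1 : dist (S l t s xx) (S l₀ t s xx) < ε / 8 := hL l hl₂ xx hxD
    have hd2 : dist (S l₀ t s xx) (S l₀ t s w) < ε / 8 := hU xx hxD w hwD hxw
    have : dist (S l t s xx) (S l₀ t s w) < ε / 2 := by
      have := dist_triangle (S l t s xx) (S l₀ t s xx) (S l₀ t s w)
      linarith
    calc EMetric.infEdist (S l t s xx) (A l₀ t) ≤ edist (S l t s xx) (S l₀ t s w) :=
          EMetric.infEdist_le_edist_of_mem hgw
      _ ≤ ENNReal.ofReal (ε / 2) := by
          rw [edist_dist]; exact ENNReal.ofReal_le_ofReal this.le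
  have claim2 : ∀ z ∈ A l₀ t, EMetric.infEdist z (A l t) ≤ ENNReal.ofReal (ε / 2) := by
    intro z hz
    rw [← hinv_l₀] at hz
    obtain ⟨xx, hx, rfl⟩ := hz
    have hxD : xx ∈ D := hAD l₀ s hx
    have h1 : EMetric.infEdist xx (A l s) < ENNReal.ofReal η := hLsc l hl₄ xx hx
    obtain ⟨w, hwA, hw⟩ := EMetric.infEdist_lt_iff.1 h1
    have hxw : dist xx w < η := edist_lt_ofReal.1 hw
    have hwD : w ∈ D := hAD l s hwA
    have hgw : S l t s w ∈ A l t := hinv_l ▸ Set.mem_image_of_mem _ hwA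
    have hd1 : dist (S l₀ t s xx) (S l₀ t s w) < ε / 8 := hU xx hxD w hwD hxw
    have hd2 : dist (S l₀ t s w) (S l t s w) < ε / 8 := by
      rw [dist_comm]; exact hL l hl₂ w hwD
    have : dist (S l₀ t s xx) (S l t s w) < ε / 2 := by
      have := dist_triangle (S l₀ t s xx) (S l₀ t s w) (S l t s w)
      linarith
    calc EMetric.infEdist (S l₀ t s xx) (A l t) ≤ edist (S l₀ t s xx) (S l t s w) :=
          EMetric.infEdist_le_edist_of_mem hgw
      _ ≤ ENNReal.ofReal (ε / 2) := by
          rw [edist_dist]; exact ENNReal.ofReal_le_ofReal this.le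
  have hEd : EMetric.hausdorffEdist (A l t) (A l₀ t) ≤ ENNReal.ofReal (ε / 2) :=
    EMetric.hausdorffEdist_le_of_infEdist claim1 claim2
  have hhd : hausdorffDist (A l t) (A l₀ t) ≤ ε / 2 := by
    rw [hausdorffDist]
    calc (EMetric.hausdorffEdist (A l t) (A l₀ t)).toReal
        ≤ (ENNReal.ofReal (ε / 2)).toReal := ENNReal.toReal_mono ENNReal.ofReal_ne_top hEd
      _ = ε / 2 := ENNReal.toReal_ofReal (by linarith)
  linarith
end

section
/- Let Λ and X be complete metric spaces and let S_λ(·,·), λ ∈ Λ, be a family of processes on X. Assume: (L1) each S_λ has a pullback attractor 𝒜_λ(·); (L2) there is a bounded subset D of X with 𝒜_λ(t) ⊆ D for every λ ∈ Λ and every t ∈ ℝ; (L3) for every s ∈ ℝ and t ≥ s the map λ ↦ S_λ(t,s)x is continuous, uniformly for x in bounded subsets of X; and moreover for every λ₀ ∈ Λ and every t ∈ ℝ there exists δ > 0 such that the closure of ⋃_{λ ∈ B_Λ(λ₀,δ)} 𝒜_λ(t) is compact. Then there exists a residual set Λ_* ⊆ Λ such that for every t ∈ ℝ the function λ ↦ 𝒜_λ(t),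 into the nonempty compact subsets of X with the Hausdorff metric, is continuous at each λ ∈ Λ_*. -/
open Filter Topology Metric Bornology

/-!
Upper semicontinuity of `λ ↦ 𝒜_λ(t)` holds at every `λ₀`: writing `𝒜_λ(t) = S_λ(t,s) 𝒜_λ(s)`
with `𝒜_λ(s) ⊆ D` and `s` far in the past, `S_λ(t,s) → S_λ₀(t,s)` uniformly on `D`, and
`S_λ₀(t,s) D` lies in a small neighbourhood of `𝒜_λ₀(t)` by pullback attraction.

Lower semicontinuity holds on a residual set, by an argument of Fort's type. Near any `λ₀` all
attractors lie in one compact `K`; cover `K` by finitely many closed `ε/2`-balls and record which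
of them `𝒜_λ(t)` meets. By upper semicontinuity this finite pattern can only shrink near a point,
so in every open set it is locally constant around a point where it is minimal, and there the
attractors are `ε`-close from below. Intersecting over rational times and `ε = 1/(n+1)` keeps the
set residual; at an arbitrary time `t` one passes from a rational `q < t` using
`𝒜_λ(t) = S_λ(t,q) 𝒜_λ(q)` and the uniform continuity of `S_λ₀(t,q)` on `K`.
-/

open Set

section HausdorffSemicontinuity

variable {Λ X Y : Type*} [TopologicalSpace Λ] [PseudoMetricSpace X] [PseudoMetricSpace Y]

/-- `ρ_X(F l, F l₀) → 0` as `l → l₀` (and below, `ρ_X(F l₀, F l) → 0`), phrased with open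
thickenings so that no finiteness of `hausdorffEdist` is ever needed. -/
def UpperHausdorffSemicontinuousAt (F : Λ → Set X) (l₀ : Λ) : Prop :=
  ∀ ε > 0, ∀ᶠ l in 𝓝 l₀, F l ⊆ thickening ε (F l₀)

def LowerHausdorffSemicontinuousAt (F : Λ → Set X) (l₀ : Λ) : Prop :=
  ∀ ε > 0, ∀ᶠ l in 𝓝 l₀, F l₀ ⊆ thickening ε (F l)

theorem UpperHausdorffSemicontinuousAt.eventually_hausdorffDist_lt {F : Λ → Set X} {l₀ : Λ}
    (hu : UpperHausdorffSemicontinuousAt F l₀) (hl : LowerHausdorffSemicontinuousAt F l₀)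
    {ε : ℝ} (hε : 0 < ε) :
    ∀ᶠ l in 𝓝 l₀, hausdorffDist (F l) (F l₀) < ε := by
  filter_upwards [hu (ε / 2) (half_pos hε), hl (ε / 2) (half_pos hε)] with l hup hlow
  refine (hausdorffDist_le_of_mem_dist (half_pos hε).le (fun x hx => ?_) fun x hx => ?_).trans_lt
    (half_lt_self hε)
  · obtain ⟨y, hy, hxy⟩ := mem_thickening_iff.1 (hup hx)
    exact ⟨y, hy, hxy.le⟩
  · obtain ⟨y, hy, hxy⟩ := mem_thickening_iff.1 (hlow hx)
    exact ⟨y, hy, hxy.le⟩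

theorem UpperHausdorffSemicontinuousAt.eventually_inter_nonempty_imp {F : Λ → Set X} {l₀ : Λ}
    (hu : UpperHausdorffSemicontinuousAt F l₀) (hF : IsCompact (F l₀)) {C : Set X}
    (hC : IsClosed C) :
    ∀ᶠ l in 𝓝 l₀, (F l ∩ C).Nonempty → (F l₀ ∩ C).Nonempty := by
  by_cases h : (F l₀ ∩ C).Nonempty
  · exact .of_forall fun _ _ => h
  obtain ⟨δ, hδ, hδC⟩ :=
    hF.exists_thickening_subset_open hC.isOpen_compl fun x hx hxC => h ⟨x, hx, hxC⟩
  filter_upwards [hu δ hδ] with l hl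
  rintro ⟨x, hxF, hxC⟩
  exact absurd hxC (hδC (hl hxF))

theorem IsOpen.exists_eventually_eq_of_forall_eventually_le {α : Type*} [PartialOrder α]
    [WellFoundedLT α] {p : Λ → α} {U : Set Λ} (hU : IsOpen U) (hne : U.Nonempty)
    (hp : ∀ l ∈ U, ∀ᶠ l' in 𝓝 l, p l' ≤ p l) : ∃ l₁ ∈ U, ∀ᶠ l in 𝓝 l₁, p l = p l₁ := by
  obtain ⟨_, ⟨l₁, hl₁, rfl⟩, hmin⟩ := wellFounded_lt.has_min (p '' U) (hne.image p)
  refine ⟨l₁, hl₁, ?_⟩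
  filter_upwards [hp l₁ hl₁, hU.mem_nhds hl₁] with l hle hl
  exact hle.eq_of_not_lt (hmin _ ⟨l, hl, rfl⟩)

theorem dense_interior_setOf_subset_thickening {F : Λ → Set X} (hFc : ∀ l, IsCompact (F l))
    (hFu : ∀ l, UpperHausdorffSemicontinuousAt F l)
    (hFK : ∀ l₀, ∃ K, IsCompact K ∧ ∀ᶠ l in 𝓝 l₀, F l ⊆ K) {ε : ℝ} (hε : 0 < ε) :
    Dense (interior {l₀ | ∀ᶠ l in 𝓝 l₀, F l₀ ⊆ thickening ε (F l)}) := by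
  refine dense_iff_inter_open.2 fun U hU ⟨m, hm⟩ => ?_
  obtain ⟨K, hK, hmK⟩ := hFK m
  obtain ⟨V, hVK, hV, hmV⟩ := mem_nhds_iff.1 hmK
  obtain ⟨T, -, hT, hKT⟩ := finite_cover_balls_of_compact hK (half_pos hε)
  have := hT.to_subtype
  let p : Λ → Set T := fun l => {y | (F l ∩ closedBall y (ε / 2)).Nonempty}
  obtain ⟨l₁, ⟨hl₁U, hl₁V⟩, hl₁⟩ :=
    (hU.inter hV).exists_eventually_eq_of_forall_eventually_le (p := p) ⟨m, hm, hmV⟩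
      fun l _ => eventually_all.2 fun y =>
        (hFu l).eventually_inter_nonempty_imp (hFc l) isClosed_closedBall
  refine ⟨l₁, hl₁U, mem_interior_iff_mem_nhds.2 ?_⟩
  have hstable : ∀ᶠ l in 𝓝 l₁, p l = p l₁ ∧ l ∈ V := hl₁.and (hV.mem_nhds hl₁V)
  filter_upwards [hstable, hstable.eventually_nhds] with l₀ hl₀ hnear
  obtain ⟨hp₀, hl₀V⟩ := hl₀
  filter_upwards [hnear] with l hl x hx
  obtain ⟨y, hyT, hxy⟩ := mem_iUnion₂.1 (hKT (hVK hl₀V hx))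
  have hy : (⟨y, hyT⟩ : T) ∈ p l := by
    rw [hl.1, ← hp₀]
    exact ⟨x, hx, ball_subset_closedBall hxy⟩
  obtain ⟨z, hz, hzy⟩ := hy
  refine mem_thickening_iff.2 ⟨z, hz, ?_⟩
  calc dist x z ≤ dist x y + dist z y := dist_triangle_right x z y
    _ < ε / 2 + ε / 2 := add_lt_add_of_lt_of_le hxy hzy
    _ = ε := add_halves ε

theorem eventually_residual_lowerHausdorffSemicontinuousAt {F : Λ → Set X}
    (hFc : ∀ l, IsCompact (F l)) (hFu : ∀ l, UpperHausdorffSemicontinuousAt F l)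
    (hFK : ∀ l₀, ∃ K, IsCompact K ∧ ∀ᶠ l in 𝓝 l₀, F l ⊆ K) :
    ∀ᶠ l₀ in residual Λ, LowerHausdorffSemicontinuousAt F l₀ := by
  have hresidual (n : ℕ) :
      ∀ᶠ l₀ in residual Λ, ∀ᶠ l in 𝓝 l₀, F l₀ ⊆ thickening (1 / (n + 1)) (F l) :=
    mem_of_superset (residual_of_dense_open isOpen_interior
      (dense_interior_setOf_subset_thickening hFc hFu hFK Nat.one_div_pos_of_nat)) interior_subset
  filter_upwards [eventually_countable_forall.2 hresidual] with l₀ hl₀ ε hε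
  obtain ⟨n, hn⟩ := exists_nat_one_div_lt hε
  exact (hl₀ n).mono fun l hl => hl.trans (thickening_mono hn.le _)

theorem LowerHausdorffSemicontinuousAt.image {F : Λ → Set X} {Φ : Λ → X → Y} {l₀ : Λ} {K : Set X}
    (hF : LowerHausdorffSemicontinuousAt F l₀) (hK : IsCompact K) (hFK : ∀ᶠ l in 𝓝 l₀, F l ⊆ K)
    (hΦ₀ : ContinuousOn (Φ l₀) K) (hΦ : TendstoUniformlyOn Φ (Φ l₀) (𝓝 l₀) K) :
    LowerHausdorffSemicontinuousAt (fun l => Φ l '' F l) l₀ := by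
  intro ε hε
  obtain ⟨δ, hδ, hΦ₀δ⟩ := Metric.uniformContinuousOn_iff.1
    (hK.uniformContinuousOn_of_continuous hΦ₀) (ε / 2) (half_pos hε)
  have hl₀K : F l₀ ⊆ K := hFK.self_of_nhds
  filter_upwards [hF δ hδ, hFK, Metric.tendstoUniformlyOn_iff.1 hΦ (ε / 2) (half_pos hε)]
    with l hlow hlK hclose
  rintro _ ⟨v, hv, rfl⟩
  obtain ⟨u, hu, hvu⟩ := mem_thickening_iff.1 (hlow hv)
  refine mem_thickening_iff.2 ⟨Φ l u, mem_image_of_mem _ hu, ?_⟩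
  calc dist (Φ l₀ v) (Φ l u) ≤ dist (Φ l₀ v) (Φ l₀ u) + dist (Φ l₀ u) (Φ l u) := dist_triangle ..
    _ < ε / 2 + ε / 2 := add_lt_add (hΦ₀δ v (hl₀K hv) u (hlK hu) hvu) (hclose u (hlK hu))
    _ = ε := add_halves ε

end HausdorffSemicontinuity

theorem upperHausdorffSemicontinuousAt_of_pullbackAttracts {Λ X : Type*} [TopologicalSpace Λ]
    [MetricSpace X] {S : Λ → ℝ → ℝ → X → X} {A : Λ → ℝ → Set X} {D : Set X} {l₀ : Λ} {t : ℝ}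
    (hD : IsBounded D) (hAD : ∀ l s, A l s ⊆ D) (hinv : ∀ l s, s ≤ t → S l t s '' A l s = A l t)
    (hattr : PullbackAttracts (S l₀) (A l₀))
    (hunif : ∀ s ≤ t, TendstoUniformlyOn (fun l => S l t s) (S l₀ t s) (𝓝 l₀) D) :
    UpperHausdorffSemicontinuousAt (fun l => A l t) l₀ := by
  intro ε hε
  obtain ⟨s₀, hs₀⟩ := hattr D hD t (ε / 2) (half_pos hε)
  set s := min s₀ t
  filter_upwards [Metric.tendstoUniformlyOn_iff.1 (hunif s (min_le_right _ _)) (ε / 2)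
    (half_pos hε)] with l hl
  rw [← hinv l s (min_le_right _ _)]
  rintro _ ⟨x, hx, rfl⟩
  have hattracted : S l₀ t s x ∈ thickening (ε / 2) (A l₀ t) :=
    hs₀ s (min_le_left _ _) x (hAD l s hx)
  have hnear : S l t s x ∈ thickening (ε / 2) (thickening (ε / 2) (A l₀ t)) :=
    mem_thickening_iff.2 ⟨_, hattracted, dist_comm (S l₀ t s x) _ ▸ hl x (hAD l s hx)⟩
  simpa using thickening_thickening_subset _ _ _ hnear

theorem stmt8_general {Λ X : Type*} [MetricSpace Λ] [MetricSpace X]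
    (S : Λ → ℝ → ℝ → X → X) (hproc : ∀ l : Λ, IsProcess (S l))
    -- (L1): pullback attractors
    (A : Λ → ℝ → Set X) (hA : ∀ l : Λ, IsPullbackAttractor (S l) (A l))
    -- (L2): a common bounded set containing all attractors
    (D : Set X) (hD : IsBounded D) (hAD : ∀ (l : Λ) (t : ℝ), A l t ⊆ D)
    -- (L3): continuity in `λ`, uniformly for `x` in bounded sets
    (hL3 : ∀ s t : ℝ, s ≤ t → ∀ B : Set X, IsBounded B → ∀ l₀ : Λ, ∀ ε : ℝ, 0 < ε →
      ∃ δ : ℝ, 0 < δ ∧ ∀ l : Λ, dist l l₀ < δ → ∀ x ∈ B,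
        dist (S l t s x) (S l₀ t s x) < ε)
    -- local compactness of the union of nearby attractors
    (hcpt : ∀ (l₀ : Λ) (t : ℝ), ∃ δ : ℝ, 0 < δ ∧
      IsCompact (closure (⋃ l ∈ Metric.ball l₀ δ, A l t))) :
    ∃ Λs ∈ residual Λ, ∀ l₀ ∈ Λs, ∀ t : ℝ, ∀ ε : ℝ, 0 < ε →
      ∃ δ : ℝ, 0 < δ ∧ ∀ l : Λ, dist l l₀ < δ →
        hausdorffDist (A l t) (A l₀ t) < ε := by
  have hunif (l₀ : Λ) (s t : ℝ) (hst : s ≤ t) (B : Set X) (hB : IsBounded B) :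
      TendstoUniformlyOn (fun l => S l t s) (S l₀ t s) (𝓝 l₀) B := by
    refine Metric.tendstoUniformlyOn_iff.2 fun ε hε => ?_
    obtain ⟨δ, hδ, h⟩ := hL3 s t hst B hB l₀ ε hε
    filter_upwards [ball_mem_nhds l₀ hδ] with l hl x hx
    exact dist_comm (S l t s x) _ ▸ h l hl x hx
  have hlocal (l₀ : Λ) (t : ℝ) : ∃ K, IsCompact K ∧ ∀ᶠ l in 𝓝 l₀, A l t ⊆ K := by
    obtain ⟨δ, hδ, hK⟩ := hcpt l₀ t
    exact ⟨_, hK, eventually_of_mem (ball_mem_nhds l₀ hδ) fun l hl =>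
      (subset_biUnion_of_mem (u := fun l => A l t) hl).trans subset_closure⟩
  have hupper (t : ℝ) (l₀ : Λ) : UpperHausdorffSemicontinuousAt (fun l => A l t) l₀ :=
    upperHausdorffSemicontinuousAt_of_pullbackAttracts hD hAD (fun l s hs => (hA l).2.1 t s hs)
      (hA l₀).2.2.1 fun s hs => hunif l₀ s t hs D hD
  have hlower :
      ∀ᶠ l₀ in residual Λ, ∀ q : ℚ, LowerHausdorffSemicontinuousAt (fun l => A l q) l₀ :=
    eventually_countable_forall.2 fun q =>
      eventually_residual_lowerHausdorffSemicontinuousAt (fun l => (hA l).1 q) (hupper q)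
        (hlocal · q)
  refine ⟨_, hlower, fun l₀ hl₀ t ε hε => ?_⟩
  obtain ⟨q, hq⟩ := exists_rat_lt t
  obtain ⟨K, hK, hAK⟩ := hlocal l₀ q
  have hflow : Continuous (S l₀ t q) :=
    (hproc l₀).2.2.comp_continuous (f := fun x : X => (t, ((q : ℝ), x))) (by fun_prop)
      fun _ => hq.le
  have hlower_t : LowerHausdorffSemicontinuousAt (fun l => A l t) l₀ := by
    simpa only [(hA _).2.1 t q hq.le] using
      (hl₀ q).image hK hAK hflow.continuousOn (hunif l₀ q t hq.le K hK.isBounded)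
  exact Metric.eventually_nhds_iff.1 ((hupper t l₀).eventually_hausdorffDist_lt hlower_t hε)

/-- Residual continuity of pullback attractors under (L1), (L2), (L3) together with
local compactness of the union of nearby attractors. -/
theorem stmt8 {Λ X : Type*} [MetricSpace Λ] [CompleteSpace Λ]
    [MetricSpace X] [CompleteSpace X]
    (S : Λ → ℝ → ℝ → X → X) (hproc : ∀ l : Λ, IsProcess (S l))
    -- (L1): pullback attractors
    (A : Λ → ℝ → Set X) (hA : ∀ l : Λ, IsPullbackAttractor (S l) (A l))
    -- (L2): a common bounded set containing all attractors
    (D : Set X) (hD : IsBounded D) (hAD : ∀ (l : Λ) (t : ℝ), A l t ⊆ D)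
    -- (L3): continuity in `λ`, uniformly for `x` in bounded sets
    (hL3 : ∀ s t : ℝ, s ≤ t → ∀ B : Set X, IsBounded B → ∀ l₀ : Λ, ∀ ε : ℝ, 0 < ε →
      ∃ δ : ℝ, 0 < δ ∧ ∀ l : Λ, dist l l₀ < δ → ∀ x ∈ B,
        dist (S l t s x) (S l₀ t s x) < ε)
    -- local compactness of the union of nearby attractors
    (hcpt : ∀ (l₀ : Λ) (t : ℝ), ∃ δ : ℝ, 0 < δ ∧
      IsCompact (closure (⋃ l ∈ Metric.ball l₀ δ, A l t))) :
    ∃ Λs ∈ residual Λ, ∀ l₀ ∈ Λs, ∀ t : ℝ, ∀ ε : ℝ, 0 < ε →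
      ∃ δ : ℝ, 0 < δ ∧ ∀ l : Λ, dist l l₀ < δ →
        hausdorffDist (A l t) (A l₀ t) < ε :=
  stmt8_general S hproc A hA D hD hAD hL3 hcpt
end

section
/- Let X be a complete metric space, let S(·,·) be a process on X with pullback attractor 𝒜(·), and let D ⊆ X be a bounded set such that 𝒜(s) ⊆ D for every s ∈ ℝ. Then for every t ∈ ℝ: (i) 𝒜(t) ⊆ S(t,s)D for all s ≤ t, and (ii) Δ_X(closure(S(t,s)D), 𝒜(t)) → 0 as s → −∞, i.e. 𝒜(t) is the limit of the sets closure(S(t,s)D) in the Hausdorff metric. -/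
open Filter Topology Metric Bornology

/-! Invariance carries `A s ⊆ D` forward to `A t ⊆ S t s '' D`, so the semidistance from `A t`
to `S t s '' D` vanishes, while the one in the other direction tends to zero by pullback
attraction of the bounded set `D`; taking closures does not change Hausdorff distances. -/

theorem Metric.tendsto_hausdorffEDist_zero_of_subset {X ι : Type*} [MetricSpace X]
    {l : Filter ι} {F : ι → Set X} {K : Set X} (hsub : ∀ᶠ i in l, K ⊆ F i)
    (hclose : ∀ ε > 0, ∀ᶠ i in l, ∀ x ∈ F i, Metric.infEDist x K < ε) :
    Tendsto (fun i => Metric.hausdorffEDist (F i) K) l (𝓝 0) := by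
  rw [ENNReal.tendsto_nhds_zero]
  intro ε hε
  filter_upwards [hsub, hclose ε hε] with i hKF hFK
  refine Metric.hausdorffEDist_le_of_infEDist (fun x hx => (hFK x hx).le) fun x hx => ?_
  rw [Metric.infEDist_zero_of_mem (hKF hx)]
  exact zero_le

theorem PullbackAttracts.eventually_infEDist_image_lt {X : Type*} [MetricSpace X]
    {S : ℝ → ℝ → X → X} {A : ℝ → Set X} (hattr : PullbackAttracts S A) {B : Set X}
    (hB : IsBounded B) (t : ℝ) {ε : ENNReal} (hε : 0 < ε) :
    ∀ᶠ s in atBot, ∀ x ∈ S t s '' B, Metric.infEDist x (A t) < ε := by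
  obtain ⟨δ, -, hδ_pos, hδε⟩ := ENNReal.lt_iff_exists_real_btwn.mp hε
  obtain ⟨s₀, hs₀⟩ := hattr B hB t δ (ENNReal.ofReal_pos.mp hδ_pos)
  filter_upwards [eventually_le_atBot s₀] with s hs
  rintro _ ⟨y, hy, rfl⟩
  exact (hs₀ s hs y hy).trans hδε

theorem IsPullbackAttractor.subset_image {X : Type*} [MetricSpace X]
    {S : ℝ → ℝ → X → X} {A : ℝ → Set X} (hA : IsPullbackAttractor S A) {D : Set X}
    {s : ℝ} (hAD : A s ⊆ D) {t : ℝ} (hst : s ≤ t) : A t ⊆ S t s '' D :=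
  hA.2.1 t s hst ▸ Set.image_mono hAD

theorem IsPullbackAttractor.pullbackAttracts {X : Type*} [MetricSpace X]
    {S : ℝ → ℝ → X → X} {A : ℝ → Set X} (hA : IsPullbackAttractor S A) :
    PullbackAttracts S A :=
  hA.2.2.1

theorem stmt9_general {X : Type*} [MetricSpace X]
    (S : ℝ → ℝ → X → X)
    (A : ℝ → Set X) (hA : IsPullbackAttractor S A)
    (D : Set X) (hD : IsBounded D) (hAD : ∀ s : ℝ, A s ⊆ D) :
    ∀ t : ℝ,
      (∀ s ≤ t, A t ⊆ S t s '' D) ∧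
      Tendsto (fun s : ℝ => EMetric.hausdorffEdist (closure (S t s '' D)) (A t))
        atBot (𝓝 0) := by
  intro t
  have hsub : ∀ s ≤ t, A t ⊆ S t s '' D := fun s => hA.subset_image (hAD s)
  refine ⟨hsub, ?_⟩
  refine (Metric.tendsto_hausdorffEDist_zero_of_subset (eventually_le_atBot t |>.mono hsub)
    fun ε hε => hA.pullbackAttracts.eventually_infEDist_image_lt hD t hε).congr fun s => ?_
  exact Metric.hausdorffEDist_closure_left.symm

/-- If `A(·)` is the pullback attractor of a process `S` and `D` is a bounded set
containing `A(s)` for every `s`, then for every `t`: (i) `A(t) ⊆ S(t,s)D` for all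
`s ≤ t`, and (ii) `closure (S(t,s)D) → A(t)` in the Hausdorff metric as `s → −∞`. -/
theorem stmt9 {X : Type*} [MetricSpace X] [CompleteSpace X]
    (S : ℝ → ℝ → X → X) (hproc : IsProcess S)
    (A : ℝ → Set X) (hA : IsPullbackAttractor S A)
    (D : Set X) (hD : IsBounded D) (hAD : ∀ s : ℝ, A s ⊆ D) :
    ∀ t : ℝ,
      (∀ s ≤ t, A t ⊆ S t s '' D) ∧
      Tendsto (fun s : ℝ => EMetric.hausdorffEdist (closure (S t s '' D)) (A t))
        atBot (𝓝 0) :=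
  stmt9_general S A hA D hD hAD
end

section
/- Let Λ and X be complete metric spaces and let S_λ(·,·), λ ∈ Λ, be a family of processes on X, each possessing a uniform attractor 𝔸_λ. Suppose there exists a compact set K ⊆ X such that: (a) for every bounded B ⊆ X and each λ ∈ Λ there exists t_{B,λ} such that S_λ(t+s,s)B ⊆ K for all t ≥ t_{B,λ} and all s ∈ ℝ; and (b) for each t > 0 the map λ ↦ S_λ(t+s,s)x is continuous, uniformly for s ∈ ℝ and x ∈ K. Then the map λ ↦ 𝔸_λ, into the nonempty compact subsets of X with the Hausdorff metric, is continuous at every point of a residual subset of Λ. -/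
open Filter Topology Metric Bornology

/-- `A` uniformly attracts every bounded set under the process `S`:
`lim_{t→∞} sup_{s∈ℝ} ρ_X(S(t+s,s)B, A) = 0` for every bounded `B`. -/
def UniformlyAttracts {X : Type*} [MetricSpace X] (S : ℝ → ℝ → X → X) (A : Set X) :
    Prop :=
  ∀ B : Set X, IsBounded B → ∀ ε : ℝ, 0 < ε → ∃ T : ℝ, ∀ t ≥ T, ∀ s : ℝ, ∀ x ∈ B,
    EMetric.infEdist (S (t + s) s x) A < ENNReal.ofReal ε

/-- A uniform attractor for the process `S`: the minimal compact set that uniformly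
attracts every bounded set. -/
def IsUniformAttractor {X : Type*} [MetricSpace X] (S : ℝ → ℝ → X → X) (A : Set X) :
    Prop :=
  IsCompact A ∧ UniformlyAttracts S A ∧
  ∀ C : Set X, IsCompact C → UniformlyAttracts S C → A ⊆ C

/-!
The attractor map `λ ↦ 𝔸_λ` is upper semicontinuous: for `λ` near `λ₀`, after a fixed time
`t₀` the process `S_λ` maps the absorbing set `K` close to where `S_{λ₀}` maps it, namely into a
small neighbourhood of `𝔸_{λ₀}`, so `K ∩ cthickening ε 𝔸_{λ₀}` is a compact uniformly absorbing
set for `S_λ` and contains `𝔸_λ` by minimality.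

An upper semicontinuous map `F` with nonempty compact values is Hausdorff continuous on a
residual set (Fort's theorem). For every point `x` of a countable set `D` dense in `⋃ F λ`, the
function `λ ↦ infDist x (F λ)` is lower semicontinuous, hence continuous off the meagre union of
the frontiers of its superlevel sets `{q < infDist x (F ·)}`, `q ∈ ℚ`. At a point where all of
these functions are continuous, covering the compact set `F λ₀` by finitely many small balls
centred in `D` gives the missing lower semicontinuity of `F`.
-/

open TopologicalSpace

section Attractor

variable {X : Type*} [MetricSpace X] {S : ℝ → ℝ → X → X} {A K C : Set X}

def UniformlyAbsorbs (S : ℝ → ℝ → X → X) (K : Set X) : Prop :=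
  ∀ B : Set X, IsBounded B → ∃ tB : ℝ, ∀ t ≥ tB, ∀ s : ℝ, ∀ x ∈ B, S (t + s) s x ∈ K

lemma UniformlyAbsorbs.uniformlyAttracts (hK : UniformlyAbsorbs S K) : UniformlyAttracts S K := by
  intro B hB ε hε
  obtain ⟨T, hT⟩ := hK B hB
  refine ⟨T, fun t ht s x hx => ?_⟩
  change infEDist _ _ < _
  rw [infEDist_zero_of_mem (hT t ht s x hx)]
  exact ENNReal.ofReal_pos.2 hε

lemma UniformlyAbsorbs.inter (hK : UniformlyAbsorbs S K) (hC : UniformlyAbsorbs S C) :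
    UniformlyAbsorbs S (K ∩ C) := by
  intro B hB
  obtain ⟨tK, htK⟩ := hK B hB
  obtain ⟨tC, htC⟩ := hC B hB
  exact ⟨max tK tC, fun t ht s x hx =>
    ⟨htK t (le_of_max_le_left ht) s x hx, htC t (le_of_max_le_right ht) s x hx⟩⟩

lemma IsProcess.uniformlyAbsorbs_of_mapsTo (hS : IsProcess S) (hK : UniformlyAbsorbs S K)
    {t₀ : ℝ} (ht₀ : 0 ≤ t₀) (hmaps : ∀ s, Set.MapsTo (S (t₀ + s) s) K C) :
    UniformlyAbsorbs S C := by
  intro B hB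
  obtain ⟨tB, htB⟩ := hK B hB
  refine ⟨max tB 0 + t₀, fun t ht s x hx => ?_⟩
  have hcocycle : S (t₀ + (t - t₀ + s)) (t - t₀ + s) (S (t - t₀ + s) s x) = S (t + s) s x := by
    rw [show t₀ + (t - t₀ + s) = t + s by ring]
    exact congrFun (hS.2.1 _ _ _ (by linarith [le_max_right tB 0]) (by linarith)) x
  rw [← hcocycle]
  exact hmaps _ (htB _ (by linarith [le_max_left tB 0]) s x hx)

lemma UniformlyAttracts.nonempty [Nonempty X] (hA : UniformlyAttracts S A) : A.Nonempty := by
  obtain ⟨x⟩ := ‹Nonempty X›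
  obtain ⟨T, hT⟩ := hA {x} isBounded_singleton 1 one_pos
  refine Set.nonempty_iff_ne_empty.2 fun hempty => ?_
  have : infEDist (S (T + 0) 0 x) A < ENNReal.ofReal 1 := hT T le_rfl 0 x rfl
  rw [hempty, infEDist_empty] at this
  exact not_top_lt this

lemma IsUniformAttractor.subset_of_uniformlyAbsorbs (hA : IsUniformAttractor S A)
    (hK : IsCompact K) (habs : UniformlyAbsorbs S K) : A ⊆ K :=
  hA.2.2 K hK habs.uniformlyAttracts

end Attractor

lemma eventually_uniformAttractor_subset_thickening {Λ X : Type*} [TopologicalSpace Λ]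
    [MetricSpace X] {S : Λ → ℝ → ℝ → X → X} {A : Λ → Set X} {K : Set X}
    (hproc : ∀ l, IsProcess (S l)) (hA : ∀ l, IsUniformAttractor (S l) (A l))
    (hK : IsCompact K) (habs : ∀ l, UniformlyAbsorbs (S l) K) {l₀ : Λ}
    (hunif : ∀ t > 0, ∀ ε > 0, ∀ᶠ l in 𝓝 l₀, ∀ s : ℝ, ∀ x ∈ K,
      dist (S l (t + s) s x) (S l₀ (t + s) s x) < ε)
    {ε : ℝ} (hε : 0 < ε) :
    ∀ᶠ l in 𝓝 l₀, A l ⊆ thickening ε (A l₀) := by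
  obtain ⟨T, hT⟩ := (hA l₀).2.1 K hK.isBounded (ε / 4) (by positivity)
  obtain ⟨t₀, hTt₀, ht₀⟩ : ∃ t₀, T ≤ t₀ ∧ 0 < t₀ :=
    ⟨max T 1, le_max_left T 1, lt_max_of_lt_right one_pos⟩
  filter_upwards [hunif _ ht₀ (ε / 4) (by positivity)] with l hl
  have hmaps : ∀ s, Set.MapsTo (S l (t₀ + s) s) K (cthickening (ε / 2) (A l₀)) := by
    intro s x hx
    rw [mem_cthickening_iff]
    calc infEDist (S l (t₀ + s) s x) (A l₀)
        ≤ edist (S l (t₀ + s) s x) (S l₀ (t₀ + s) s x)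
          + infEDist (S l₀ (t₀ + s) s x) (A l₀) := infEDist_le_edist_add_infEDist
      _ ≤ ENNReal.ofReal (ε / 4) + ENNReal.ofReal (ε / 4) := by
          rw [edist_dist]
          exact add_le_add (ENNReal.ofReal_le_ofReal (hl s x hx).le)
            (hT _ hTt₀ s x hx).le
      _ = ENNReal.ofReal (ε / 2) := by
          rw [← ENNReal.ofReal_add (by positivity) (by positivity)]
          ring_nf
  have habsC := (habs l).inter ((hproc l).uniformlyAbsorbs_of_mapsTo (habs l) ht₀.le hmaps)
  calc A l ⊆ K ∩ cthickening (ε / 2) (A l₀) :=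
        (hA l).subset_of_uniformlyAbsorbs (hK.inter_right isClosed_cthickening) habsC
    _ ⊆ thickening ε (A l₀) :=
        Set.inter_subset_right.trans (cthickening_subset_thickening' hε (by linarith) _)

lemma LowerSemicontinuous.eventually_residual_continuousAt {Λ : Type*} [TopologicalSpace Λ]
    {f : Λ → ℝ} (hf : LowerSemicontinuous f) : ∀ᶠ l in residual Λ, ContinuousAt f l := by
  have hU (q : ℚ) : IsOpen (f ⁻¹' Set.Ioi (q : ℝ)) := hf.isOpen_preimage q
  have hfrontier (q : ℚ) : (frontier (f ⁻¹' Set.Ioi (q : ℝ)))ᶜ ∈ residual Λ := by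
    refine residual_of_dense_open isClosed_frontier.isOpen_compl ?_
    rw [← interior_eq_empty_iff_dense_compl, ← frontier_compl]
    exact interior_frontier (hU q).isClosed_compl
  filter_upwards [countable_iInter_mem.2 hfrontier] with l hl
  refine continuousAt_iff_lower_upperSemicontinuousAt.2 ⟨hf l, fun y hy => ?_⟩
  obtain ⟨q, hlq, hqy⟩ := exists_rat_btwn hy
  have hcl : l ∉ closure (f ⁻¹' Set.Ioi (q : ℝ)) := fun h =>
    Set.mem_iInter.1 hl q ((hU q).frontier_eq ▸ ⟨h, hlq.not_gt⟩)
  filter_upwards [isClosed_closure.isOpen_compl.mem_nhds hcl] with l' hl'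
  exact (not_lt.1 fun h => hl' (subset_closure h)).trans_lt hqy

section SetValued

variable {Λ X : Type*} [TopologicalSpace Λ] [MetricSpace X] {F : Λ → NonemptyCompacts X}

lemma lowerSemicontinuous_infDist_of_eventually_subset_thickening
    (hF : ∀ l₀, ∀ ε > 0, ∀ᶠ l in 𝓝 l₀, (F l : Set X) ⊆ thickening ε (F l₀)) (x : X) :
    LowerSemicontinuous fun l => infDist x (F l) := by
  intro l₀ y hy
  filter_upwards [hF l₀ _ (sub_pos.2 hy)] with l hl
  obtain ⟨b, hb, hxb⟩ := (F l).isCompact.exists_infDist_eq_dist (F l).nonempty x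
  have hbF := (mem_thickening_iff_infDist_lt (F l₀).nonempty).1 (hl hb)
  have := infDist_le_infDist_add_dist (x := x) (y := b) (s := (F l₀ : Set X))
  rw [hxb]
  linarith

lemma eventually_forall_infDist_lt {l₀ : Λ} {D : Set X} (hD : (F l₀ : Set X) ⊆ closure D)
    (husc : ∀ d ∈ D, UpperSemicontinuousAt (fun l => infDist d (F l)) l₀) {ε : ℝ}
    (hε : 0 < ε) : ∀ᶠ l in 𝓝 l₀, ∀ a ∈ F l₀, infDist a (F l) < ε := by
  have hcover : (F l₀ : Set X) ⊆ ⋃ d ∈ D, ball d (ε / 3) := fun a ha => by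
    obtain ⟨d, hd, had⟩ := mem_closure_iff.1 (hD ha) (ε / 3) (by positivity)
    exact Set.mem_biUnion hd (mem_ball.2 (dist_comm a d ▸ had))
  obtain ⟨D', hD'D, hD'fin, hD'cover⟩ :=
    (F l₀).isCompact.elim_finite_subcover_image (fun _ _ => isOpen_ball) hcover
  have hnear : ∀ᶠ l in 𝓝 l₀, ∀ d ∈ D', infDist d (F l) < infDist d (F l₀) + ε / 3 :=
    (eventually_all_finite hD'fin).2 fun d hd => husc d (hD'D hd) _ (by linarith)
  filter_upwards [hnear] with l hl a ha
  obtain ⟨d, hd, had⟩ := Set.mem_iUnion₂.1 (hD'cover ha)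
  have had' : dist a d < ε / 3 := mem_ball.1 had
  have hd₀ : infDist d (F l₀) ≤ dist d a := infDist_le_dist_of_mem ha
  calc infDist a (F l) ≤ infDist d (F l) + dist a d := infDist_le_infDist_add_dist
    _ < ε := by linarith [hl d hd, dist_comm a d]

lemma continuousAt_of_eventually_subset_thickening {l₀ : Λ}
    (hupper : ∀ ε > 0, ∀ᶠ l in 𝓝 l₀, (F l : Set X) ⊆ thickening ε (F l₀))
    (hlower : ∀ ε > 0, ∀ᶠ l in 𝓝 l₀, ∀ a ∈ F l₀, infDist a (F l) < ε) :
    ContinuousAt F l₀ := by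
  refine Metric.tendsto_nhds.2 fun ε hε => ?_
  filter_upwards [hupper (ε / 2) (half_pos hε), hlower (ε / 2) (half_pos hε)] with l hu hl
  refine (hausdorffDist_le_of_infDist (half_pos hε).le (fun b hb => ?_)
    fun a ha => (hl a ha).le).trans_lt (half_lt_self hε)
  exact ((mem_thickening_iff_infDist_lt (F l₀).nonempty).1 (hu hb)).le

theorem eventually_residual_continuousAt_of_eventually_subset_thickening
    (hsep : IsSeparable (⋃ l, (F l : Set X)))
    (hF : ∀ l₀, ∀ ε > 0, ∀ᶠ l in 𝓝 l₀, (F l : Set X) ⊆ thickening ε (F l₀)) :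
    ∀ᶠ l in residual Λ, ContinuousAt F l := by
  obtain ⟨D, hDcount, hD⟩ := hsep
  have hinfDist : ∀ᶠ l in residual Λ, ∀ d ∈ D, ContinuousAt (fun l => infDist d (F l)) l :=
    (eventually_countable_ball hDcount).2 fun d _ =>
      (lowerSemicontinuous_infDist_of_eventually_subset_thickening hF d)
        |>.eventually_residual_continuousAt
  filter_upwards [hinfDist] with l₀ hl₀
  exact continuousAt_of_eventually_subset_thickening (hF l₀) fun ε hε =>
    eventually_forall_infDist_lt ((Set.subset_iUnion _ l₀).trans hD)
      (fun d hd => (hl₀ d hd).upperSemicontinuousAt) hε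

end SetValued

theorem stmt10_general {Λ X : Type*} [MetricSpace Λ]
    [MetricSpace X]
    (S : Λ → ℝ → ℝ → X → X) (hproc : ∀ l : Λ, IsProcess (S l))
    (A : Λ → Set X) (hA : ∀ l : Λ, IsUniformAttractor (S l) (A l))
    (K : Set X) (hK : IsCompact K)
    -- (a): `K` uniformly absorbs every bounded set
    (habs : ∀ (B : Set X), IsBounded B → ∀ l : Λ, ∃ tB : ℝ, ∀ t ≥ tB, ∀ s : ℝ,
      ∀ x ∈ B, S l (t + s) s x ∈ K)
    -- (b): continuity in `λ`, uniformly for `s ∈ ℝ` and `x ∈ K`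
    (hunif : ∀ t : ℝ, 0 < t → ∀ l₀ : Λ, ∀ ε : ℝ, 0 < ε → ∃ δ : ℝ, 0 < δ ∧
      ∀ l : Λ, dist l l₀ < δ → ∀ s : ℝ, ∀ x ∈ K,
        dist (S l (t + s) s x) (S l₀ (t + s) s x) < ε) :
    ∃ Λs ∈ residual Λ, ∀ l₀ ∈ Λs, ∀ ε : ℝ, 0 < ε →
      ∃ δ : ℝ, 0 < δ ∧ ∀ l : Λ, dist l l₀ < δ →
        hausdorffDist (A l) (A l₀) < ε := by
  rcases isEmpty_or_nonempty X with hX | hX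
  · exact ⟨Set.univ, univ_mem, fun l₀ _ ε hε => ⟨1, one_pos, fun l _ => by
      rwa [Subsingleton.elim (A l) (A l₀), hausdorffDist_self_zero]⟩⟩
  have habs' (l : Λ) : UniformlyAbsorbs (S l) K := fun B hB => habs B hB l
  let F (l : Λ) : NonemptyCompacts X := ⟨⟨A l, (hA l).1⟩, (hA l).2.1.nonempty⟩
  have hsep : IsSeparable (⋃ l, (F l : Set X)) :=
    hK.isSeparable.mono (Set.iUnion_subset fun l =>
      (hA l).subset_of_uniformlyAbsorbs hK (habs' l))
  have husc (l₀ : Λ) : ∀ ε > 0, ∀ᶠ l in 𝓝 l₀, (F l : Set X) ⊆ thickening ε (F l₀) :=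
    fun ε hε => eventually_uniformAttractor_subset_thickening hproc hA hK habs'
      (fun t ht ε' hε' => eventually_nhds_iff.2 (hunif t ht l₀ ε' hε')) hε
  refine ⟨_, eventually_residual_continuousAt_of_eventually_subset_thickening hsep husc,
    fun l₀ hl₀ ε hε => ?_⟩
  obtain ⟨δ, hδ, hF⟩ := continuousAt_iff.1 hl₀ ε hε
  exact ⟨δ, hδ, fun l hl => hF hl⟩

/-- Residual continuity of uniform attractors: if there is a compact uniformly
absorbing set `K` and the processes depend on `λ` continuously, uniformly in `s ∈ ℝ`
and `x ∈ K`, then `λ ↦ 𝔸_λ` is continuous at every point of a residual subset. -/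
theorem stmt10 {Λ X : Type*} [MetricSpace Λ] [CompleteSpace Λ]
    [MetricSpace X] [CompleteSpace X]
    (S : Λ → ℝ → ℝ → X → X) (hproc : ∀ l : Λ, IsProcess (S l))
    (A : Λ → Set X) (hA : ∀ l : Λ, IsUniformAttractor (S l) (A l))
    (K : Set X) (hK : IsCompact K)
    -- (a): `K` uniformly absorbs every bounded set
    (habs : ∀ (B : Set X), IsBounded B → ∀ l : Λ, ∃ tB : ℝ, ∀ t ≥ tB, ∀ s : ℝ,
      ∀ x ∈ B, S l (t + s) s x ∈ K)
    -- (b): continuity in `λ`, uniformly for `s ∈ ℝ` and `x ∈ K`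
    (hunif : ∀ t : ℝ, 0 < t → ∀ l₀ : Λ, ∀ ε : ℝ, 0 < ε → ∃ δ : ℝ, 0 < δ ∧
      ∀ l : Λ, dist l l₀ < δ → ∀ s : ℝ, ∀ x ∈ K,
        dist (S l (t + s) s x) (S l₀ (t + s) s x) < ε) :
    ∃ Λs ∈ residual Λ, ∀ l₀ ∈ Λs, ∀ ε : ℝ, 0 < ε →
      ∃ δ : ℝ, 0 < δ ∧ ∀ l : Λ, dist l l₀ < δ →
        hausdorffDist (A l) (A l₀) < ε :=
  stmt10_general S hproc A hA K hK habs hunif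
end

section
/- Let X be a complete metric space, let S(·,·) be a process on X, fix x₀ ∈ X, and suppose there is a compact set K ⊆ X such that for every bounded B ⊆ X there exists t_B with S(t+s,s)B ⊆ K for all t ≥ t_B and all s ∈ ℝ. Define, for B ⊆ X, the uniform ω-limit set Ω(B) = ⋂_{τ∈ℝ} closure( ⋃_{s∈ℝ} ⋃_{t≥τ} S(t+s,s)B ), and set 𝔸 = closure( ⋃_{n∈ℕ} Ω(B_X(x₀,n)) ), where B_X(x₀,n) is the open ball of radius n about x₀. Then for every t ≥ 0, 𝔸 ⊆ closure( ⋃_{z∈ℝ} S(t+z,z)K ). -/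
open Filter Topology Metric Bornology

/-- For a process with a compact uniformly absorbing set `K`, the set
`𝔸 = closure (⋃ n, Ω(B(x₀,n)))`, where `Ω(B)` is the uniform ω-limit set of `B`,
satisfies `𝔸 ⊆ closure (⋃ z, S(t+z,z)K)` for every `t ≥ 0`. -/
theorem stmt11 {X : Type*} [MetricSpace X] [CompleteSpace X]
    (S : ℝ → ℝ → X → X) (hproc : IsProcess S)
    (x₀ : X) (K : Set X) (hK : IsCompact K)
    (habs : ∀ B : Set X, Bornology.IsBounded B → ∃ tB : ℝ, ∀ t ≥ tB, ∀ s : ℝ,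
      ∀ x ∈ B, S (t + s) s x ∈ K)
    (Ω : Set X → Set X)
    (hΩ : ∀ B : Set X,
      Ω B = ⋂ τ : ℝ, closure (⋃ s : ℝ, ⋃ t ∈ Set.Ici τ, S (t + s) s '' B))
    (A : Set X)
    (hA : A = closure (⋃ n : ℕ, Ω (Metric.ball x₀ n))) :
    ∀ t : ℝ, 0 ≤ t → A ⊆ closure (⋃ z : ℝ, S (t + z) z '' K) := by
  intro t ht
  rw [hA]
  apply closure_minimal _ isClosed_closure
  apply Set.iUnion_subset
  intro n
  rw [hΩ]
  obtain ⟨tB, htB⟩ := habs (Metric.ball x₀ n) Metric.isBounded_ball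
  refine Set.iInter_subset_of_subset (max tB 0 + t) (closure_mono ?_)
  intro x hx
  simp only [Set.mem_iUnion, Set.mem_image, Set.mem_Ici] at hx ⊢
  obtain ⟨s, t', ht', b, hb, rfl⟩ := hx
  have h0 : (0 : ℝ) ≤ max tB 0 := le_max_right _ _
  have h1 : tB ≤ t' - t := by
    have := le_max_left tB 0
    linarith
  have hy : S (t' - t + s) s b ∈ K := htB (t' - t) h1 s b hb
  refine ⟨t' - t + s, S (t' - t + s) s b, hy, ?_⟩
  have hc := hproc.2.1 (t' + s) (t' - t + s) s (by linarith) (by linarith)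
  have := congrFun hc b
  simp only [Function.comp_apply] at this
  rw [show t + (t' - t + s) = t' + s by ring, this]
end

section
/- Let Λ and X be complete metric spaces, let S_λ(·,·), λ ∈ Λ, be a family of processes on X, and let K ⊆ X be a compact set such that for every bounded B ⊆ X and each λ there exists t_{B,λ} with S_λ(t+s,s)B ⊆ K for all t ≥ t_{B,λ} and s ∈ ℝ. Fix t > 0 and assume the map λ ↦ S_λ(t+s,s)x is continuous, uniformly for s ∈ ℝ and x ∈ K. Then the map λ ↦ closure( ⋃_{s∈ℝ} S_λ(t+s,s)K ) is continuous from Λ into the space of nonempty closed bounded subsets of X equipped with the Hausdorff metric. -/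
open Filter Topology Metric Bornology

theorem Metric.hausdorffEDist_image_le_of_forall_edist_le {α β : Type*}
    [PseudoEMetricSpace β] {f g : α → β} {K : Set α} {r : ENNReal}
    (h : ∀ x ∈ K, edist (f x) (g x) ≤ r) : hausdorffEDist (f '' K) (g '' K) ≤ r := by
  refine hausdorffEDist_le_of_mem_edist ?_ ?_
  · rintro _ ⟨x, hx, rfl⟩
    exact ⟨g x, Set.mem_image_of_mem g hx, h x hx⟩
  · rintro _ ⟨x, hx, rfl⟩
    exact ⟨f x, Set.mem_image_of_mem f hx, edist_comm (f x) (g x) ▸ h x hx⟩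

theorem stmt12_general {Λ X : Type*} [MetricSpace Λ]
    [MetricSpace X]
    (S : Λ → ℝ → ℝ → X → X)
    (K : Set X)
    (t : ℝ)
    (hunif : ∀ l₀ : Λ, ∀ ε : ℝ, 0 < ε → ∃ δ : ℝ, 0 < δ ∧
      ∀ l : Λ, dist l l₀ < δ → ∀ s : ℝ, ∀ x ∈ K,
        dist (S l (t + s) s x) (S l₀ (t + s) s x) < ε) :
    ∀ l₀ : Λ, ∀ ε : ℝ, 0 < ε → ∃ δ : ℝ, 0 < δ ∧ ∀ l : Λ, dist l l₀ < δ →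
      EMetric.hausdorffEdist (closure (⋃ s : ℝ, S l (t + s) s '' K))
        (closure (⋃ s : ℝ, S l₀ (t + s) s '' K)) < ENNReal.ofReal ε := by
  intro l₀ ε hε
  -- halved because the supremum over `s` keeps only the non-strict bound
  obtain ⟨δ, hδ, hclose⟩ := hunif l₀ (ε / 2) (half_pos hε)
  refine ⟨δ, hδ, fun l hl => ?_⟩
  change hausdorffEDist _ _ < _
  rw [hausdorffEDist_closure]
  calc hausdorffEDist (⋃ s : ℝ, S l (t + s) s '' K) (⋃ s : ℝ, S l₀ (t + s) s '' K)
      ≤ ⨆ s : ℝ, hausdorffEDist (S l (t + s) s '' K) (S l₀ (t + s) s '' K) :=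
        hausdorffEDist_iUnion_le
    _ ≤ ENNReal.ofReal (ε / 2) := iSup_le fun s =>
        hausdorffEDist_image_le_of_forall_edist_le fun x hx => by
          rw [edist_dist]
          exact ENNReal.ofReal_le_ofReal (hclose l hl s x hx).le
    _ < ENNReal.ofReal ε := (ENNReal.ofReal_lt_ofReal_iff hε).2 (half_lt_self hε)

/-- If `K` is a compact set that uniformly absorbs every bounded set under each
process `S_λ`, and for a fixed `t > 0` the map `λ ↦ S_λ(t+s,s)x` is continuous
uniformly for `s ∈ ℝ` and `x ∈ K`, then `λ ↦ closure (⋃ s, S_λ(t+s,s)K)` is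
continuous with respect to the Hausdorff metric. -/
theorem stmt12 {Λ X : Type*} [MetricSpace Λ] [CompleteSpace Λ]
    [MetricSpace X] [CompleteSpace X]
    (S : Λ → ℝ → ℝ → X → X) (hproc : ∀ l : Λ, IsProcess (S l))
    (K : Set X) (hK : IsCompact K)
    (habs : ∀ B : Set X, Bornology.IsBounded B → ∀ l : Λ, ∃ tB : ℝ, ∀ t' ≥ tB,
      ∀ s : ℝ, ∀ x ∈ B, S l (t' + s) s x ∈ K)
    (t : ℝ) (ht : 0 < t)
    (hunif : ∀ l₀ : Λ, ∀ ε : ℝ, 0 < ε → ∃ δ : ℝ, 0 < δ ∧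
      ∀ l : Λ, dist l l₀ < δ → ∀ s : ℝ, ∀ x ∈ K,
        dist (S l (t + s) s x) (S l₀ (t + s) s x) < ε) :
    ∀ l₀ : Λ, ∀ ε : ℝ, 0 < ε → ∃ δ : ℝ, 0 < δ ∧ ∀ l : Λ, dist l l₀ < δ →
      EMetric.hausdorffEdist (closure (⋃ s : ℝ, S l (t + s) s '' K))
        (closure (⋃ s : ℝ, S l₀ (t + s) s '' K)) < ENNReal.ofReal ε :=
  stmt12_general S K t hunif
end

section
/- Let Λ and X be complete metric spaces and let S_λ(·,·), λ ∈ Λ, be a family of processes on X such that each S_λ has a pullback attractor 𝒜_λ(·), there is a bounded set D ⊆ X with 𝒜_λ(t) ⊆ D for all λ ∈ Λ and t ∈ ℝ, and for every s ∈ ℝ and t ≥ s the map λ ↦ S_λ(t,s)x is continuous uniformly for x in bounded subsets of X. Fix t ∈ ℝ and assume: (U1) pullback equi-dissipativity at time t: there exist s₀ ≤ t and a bounded set B with S_λ(t,s)D ⊆ B for every s ≤ s₀ and every λ ∈ Λ; and (U2) pullback equi-attraction at time t: lim_{s→−∞} sup_{λ∈Λ} ρ_X(S_λ(t,s)D, 𝒜_λ(t))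 = 0. Then the map λ ↦ 𝒜_λ(t), into the nonempty compact subsets of X with the Hausdorff metric, is continuous at every λ ∈ Λ. -/
open Filter Topology Metric Bornology

/-- Pullback equi-dissipativity (U1) and pullback equi-attraction (U2) at time `t`
imply that `λ ↦ 𝒜_λ(t)` is continuous at every `λ ∈ Λ` in the Hausdorff metric. -/
theorem stmt13 {Λ X : Type*} [MetricSpace Λ] [CompleteSpace Λ]
    [MetricSpace X] [CompleteSpace X]
    (S : Λ → ℝ → ℝ → X → X) (hproc : ∀ l : Λ, IsProcess (S l))
    -- (L1): pullback attractors
    (A : Λ → ℝ → Set X) (hA : ∀ l : Λ, IsPullbackAttractor (S l) (A l))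
    -- (L2): a common bounded set containing all attractors
    (D : Set X) (hD : IsBounded D) (hAD : ∀ (l : Λ) (t : ℝ), A l t ⊆ D)
    -- (L3): continuity in `λ`, uniformly for `x` in bounded sets
    (hL3 : ∀ s t : ℝ, s ≤ t → ∀ B : Set X, IsBounded B → ∀ l₀ : Λ, ∀ ε : ℝ, 0 < ε →
      ∃ δ : ℝ, 0 < δ ∧ ∀ l : Λ, dist l l₀ < δ → ∀ x ∈ B,
        dist (S l t s x) (S l₀ t s x) < ε)
    (t : ℝ)
    -- (U1): pullback equi-dissipativity at time `t`
    (hU1 : ∃ s₀ ≤ t, ∃ B : Set X, IsBounded B ∧ ∀ s ≤ s₀, ∀ l : Λ,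
      S l t s '' D ⊆ B)
    -- (U2): pullback equi-attraction at time `t`
    (hU2 : ∀ ε : ℝ, 0 < ε → ∃ s₀ : ℝ, ∀ s ≤ s₀, ∀ l : Λ, ∀ x ∈ D,
      EMetric.infEdist (S l t s x) (A l t) < ENNReal.ofReal ε) :
    ∀ l₀ : Λ, ∀ ε : ℝ, 0 < ε → ∃ δ : ℝ, 0 < δ ∧ ∀ l : Λ, dist l l₀ < δ →
      hausdorffDist (A l t) (A l₀ t) < ε := by
  intro l₀ ε hε
  have hε3 : 0 < ε / 3 := by linarith
  obtain ⟨s₁, hs₁⟩ := hU2 (ε / 3) hε3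
  set s : ℝ := min s₁ t with hs
  have hst : s ≤ t := min_le_right _ _
  have hss₁ : s ≤ s₁ := min_le_left _ _
  obtain ⟨δ, hδpos, hδ⟩ := hL3 s t hst D hD l₀ (ε / 3) hε3
  refine ⟨δ, hδpos, fun l hl => ?_⟩
  -- key pointwise bound
  have key : ∀ l₁ l₂ : Λ, (∀ x ∈ D, dist (S l₁ t s x) (S l₂ t s x) < ε / 3) →
      ∀ a ∈ A l₁ t, EMetric.infEdist a (A l₂ t) ≤ ENNReal.ofReal (2 * ε / 3) := by
    intro l₁ l₂ hdist a ha
    have hinv := (hA l₁).2.1 t s hst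
    rw [← hinv] at ha
    obtain ⟨x, hx, rfl⟩ := ha
    have hxD : x ∈ D := hAD l₁ s hx
    have h1 : edist (S l₁ t s x) (S l₂ t s x) < ENNReal.ofReal (ε / 3) :=
      edist_lt_ofReal.mpr (hdist x hxD)
    have h2 : EMetric.infEdist (S l₂ t s x) (A l₂ t) < ENNReal.ofReal (ε / 3) :=
      hs₁ s hss₁ l₂ x hxD
    calc EMetric.infEdist (S l₁ t s x) (A l₂ t)
        ≤ EMetric.infEdist (S l₂ t s x) (A l₂ t) + edist (S l₁ t s x) (S l₂ t s x) :=
          EMetric.infEdist_le_infEdist_add_edist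
      _ ≤ ENNReal.ofReal (ε / 3) + ENNReal.ofReal (ε / 3) := by
          exact add_le_add h2.le h1.le
      _ = ENNReal.ofReal (2 * ε / 3) := by
          rw [← ENNReal.ofReal_add (by linarith) (by linarith)]; ring_nf
  have h12 : ∀ a ∈ A l t, EMetric.infEdist a (A l₀ t) ≤ ENNReal.ofReal (2 * ε / 3) :=
    key l l₀ fun x hx => hδ l hl x hx
  have h21 : ∀ a ∈ A l₀ t, EMetric.infEdist a (A l t) ≤ ENNReal.ofReal (2 * ε / 3) :=
    key l₀ l fun x hx => by rw [dist_comm]; exact hδ l hl x hx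
  have hE : EMetric.hausdorffEdist (A l t) (A l₀ t) ≤ ENNReal.ofReal (2 * ε / 3) :=
    EMetric.hausdorffEdist_le_of_infEdist h12 h21
  have : hausdorffDist (A l t) (A l₀ t) ≤ 2 * ε / 3 := by
    rw [hausdorffDist]
    calc (EMetric.hausdorffEdist (A l t) (A l₀ t)).toReal
        ≤ (ENNReal.ofReal (2 * ε / 3)).toReal := ENNReal.toReal_mono ENNReal.ofReal_ne_top hE
      _ = 2 * ε / 3 := ENNReal.toReal_ofReal (by linarith)
  linarith
end

section
/- Let Λ be a compact metric space, X a complete metric space, and S_λ(·,·), λ ∈ Λ, a family of processes on X such that each S_λ has a pullback attractor 𝒜_λ(·), and for every s ∈ ℝ and t ≥ s the map λ ↦ S_λ(t,s)x is continuous uniformly for x in bounded subsets of X. Assume (U3): there is a bounded set D₁ ⊆ X with 𝒜_λ(s) ⊆ D₁ for all s ∈ ℝ and λ ∈ Λ, and a function s_*(t) ≤ t such that S_λ(t,s)D₁ ⊆ D₁ for every s ≤ s_*(t) and every λ ∈ Λ. Fix t ∈ ℝ. If the map λ ↦ 𝒜_λ(t) is continuous on Λ (with respect to the Hausdorff metric),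 then lim_{s→−∞} sup_{λ∈Λ} ρ_X(S_λ(t,s)D₁, 𝒜_λ(t)) = 0, i.e. pullback equi-attraction holds at time t with absorbing set D₁. -/
open Filter Topology Metric Bornology

/-!
Fix `λ₀` and choose `s₁ ≤ s_*(t)` with `S_{λ₀}(t,s₁)D₁` within `ε/3` of `𝒜_{λ₀}(t)`. For `λ`
near `λ₀`, (L3) at the single pair of times `(t, s₁)` and continuity of `λ ↦ 𝒜_λ(t)` give
`ρ(S_λ(t,s₁)D₁, 𝒜_λ(t)) < ε` by the triangle inequality. For `s ≤ s_*(s₁)` the positive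
invariance of `D₁` gives `S_λ(t,s)D₁ = S_λ(t,s₁)S_λ(s₁,s)D₁ ⊆ S_λ(t,s₁)D₁`, so the bound persists
for all earlier `s`. Compactness of `Λ` then makes the threshold on `s` uniform in `λ`.
-/

lemma IsProcess.apply_apply {X : Type*} [MetricSpace X] {S : ℝ → ℝ → X → X}
    (hS : IsProcess S) {t τ s : ℝ} (hsτ : s ≤ τ) (hτt : τ ≤ t) (x : X) :
    S t τ (S τ s x) = S t s x :=
  congrFun (hS.2.1 t τ s hsτ hτt) x

lemma IsProcess.image_subset_image_of_mapsTo {X : Type*} [MetricSpace X]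
    {S : ℝ → ℝ → X → X} (hS : IsProcess S) {D : Set X} {t τ s : ℝ}
    (hD : S τ s '' D ⊆ D) (hsτ : s ≤ τ) (hτt : τ ≤ t) :
    S t s '' D ⊆ S t τ '' D := by
  rintro _ ⟨x, hx, rfl⟩
  exact ⟨S τ s x, hD ⟨x, hx, rfl⟩, hS.apply_apply hsτ hτt x⟩

lemma PullbackAttracts.eventually_atBot {X : Type*} [MetricSpace X] {S : ℝ → ℝ → X → X}
    {A : ℝ → Set X} (hA : PullbackAttracts S A) {B : Set X} (hB : IsBounded B) (t : ℝ)
    {ε : ℝ} (hε : 0 < ε) :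
    ∀ᶠ s in atBot, ∀ x ∈ B, infEDist (S t s x) (A t) < ENNReal.ofReal ε :=
  Filter.eventually_atBot.2 (hA B hB t ε hε)

lemma PullbackAttracts.nonempty {X : Type*} [MetricSpace X] {S : ℝ → ℝ → X → X}
    {A : ℝ → Set X} (hA : PullbackAttracts S A) {B : Set X} (hB : IsBounded B)
    (hBne : B.Nonempty) (t : ℝ) : (A t).Nonempty := by
  obtain ⟨x, hx⟩ := hBne
  obtain ⟨s, hs⟩ := ((hA.eventually_atBot hB t one_pos).and (eventually_le_atBot t)).exists
  rw [Set.nonempty_iff_ne_empty]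
  rintro hempty
  simpa [hempty] using hs.1 x hx

lemma CompactSpace.eventually_forall_of_forall_eventually_nhds_prod {Λ α : Type*}
    [TopologicalSpace Λ] [CompactSpace Λ] {f : Filter α} {P : Λ → α → Prop}
    (hP : ∀ l₀, ∀ᶠ p in 𝓝 l₀ ×ˢ f, P p.1 p.2) : ∀ᶠ a in f, ∀ l, P l a := by
  have := isCompact_univ.mem_nhdsSet_prod_of_forall fun l₀ _ ↦ hP l₀
  rw [nhdsSet_univ, top_prod] at this
  obtain ⟨s, hs, hsub⟩ := this
  exact mem_of_superset hs fun a ha l ↦ hsub (show (l, a) ∈ Prod.snd ⁻¹' s from ha)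

lemma infEDist_le_edist_add_infEDist_add_hausdorffEDist {X : Type*} [PseudoMetricSpace X]
    (x y : X) (B C : Set X) :
    infEDist x C ≤ edist x y + infEDist y B + hausdorffEDist B C :=
  infEDist_le_infEDist_add_hausdorffEDist.trans <| by gcongr; exact infEDist_le_edist_add_infEDist

theorem eventually_nhds_prod_atBot_infEDist_lt {Λ X : Type*} [MetricSpace Λ] [MetricSpace X]
    {S : Λ → ℝ → ℝ → X → X} (hproc : ∀ l, IsProcess (S l)) {A : Λ → ℝ → Set X}
    (hA : ∀ l, IsPullbackAttractor (S l) (A l))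
    (hL3 : ∀ s t : ℝ, s ≤ t → ∀ B : Set X, IsBounded B → ∀ l₀ : Λ, ∀ ε : ℝ, 0 < ε →
      ∃ δ : ℝ, 0 < δ ∧ ∀ l : Λ, dist l l₀ < δ → ∀ x ∈ B, dist (S l t s x) (S l₀ t s x) < ε)
    {D : Set X} (hD : IsBounded D) {sStar : ℝ → ℝ} (hsStar : ∀ t, sStar t ≤ t)
    (hinv : ∀ t : ℝ, ∀ s ≤ sStar t, ∀ l : Λ, S l t s '' D ⊆ D) {t : ℝ} {l₀ : Λ}
    (hcont : ∀ ε : ℝ, 0 < ε → ∃ δ : ℝ, 0 < δ ∧ ∀ l : Λ, dist l l₀ < δ →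
      hausdorffDist (A l t) (A l₀ t) < ε) {ε : ℝ} (hε : 0 < ε) :
    ∀ᶠ p in 𝓝 l₀ ×ˢ atBot, ∀ x ∈ D, infEDist (S p.1 t p.2 x) (A p.1 t) < ENNReal.ofReal ε := by
  have hε3 : 0 < ε / 3 := by positivity
  obtain ⟨s₁, hattr, hs₁⟩ :=
    (((hA l₀).2.2.1.eventually_atBot hD t hε3).and (eventually_le_atBot (sStar t))).exists
  have hs₁t : s₁ ≤ t := hs₁.trans (hsStar t)
  have hnear : ∀ᶠ l in 𝓝 l₀, ∀ y ∈ D, infEDist (S l t s₁ y) (A l t) < ENNReal.ofReal ε := by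
    obtain ⟨δ₁, hδ₁, hclose⟩ := hL3 s₁ t hs₁t D hD l₀ _ hε3
    obtain ⟨δ₂, hδ₂, hhaus⟩ := hcont _ hε3
    refine Metric.eventually_nhds_iff.2 ⟨min δ₁ δ₂, lt_min hδ₁ hδ₂, fun l hl y hy ↦ ?_⟩
    have hAne : ∀ l, (A l t).Nonempty := fun l ↦ (hA l).2.2.1.nonempty hD ⟨y, hy⟩ t
    have hhaus' : hausdorffEDist (A l₀ t) (A l t) < ENNReal.ofReal (ε / 3) := by
      rw [ENNReal.lt_ofReal_iff_toReal_lt (hausdorffEDist_ne_top_of_nonempty_of_bounded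
        (hAne l₀) (hAne l) ((hA l₀).1 t).isBounded ((hA l).1 t).isBounded), ← hausdorffDist,
        hausdorffDist_comm]
      exact hhaus l (hl.trans_le (min_le_right _ _))
    calc infEDist (S l t s₁ y) (A l t)
        ≤ edist (S l t s₁ y) (S l₀ t s₁ y) + infEDist (S l₀ t s₁ y) (A l₀ t)
          + hausdorffEDist (A l₀ t) (A l t) :=
          infEDist_le_edist_add_infEDist_add_hausdorffEDist _ _ _ _
      _ < ENNReal.ofReal (ε / 3) + ENNReal.ofReal (ε / 3) + ENNReal.ofReal (ε / 3) :=
          ENNReal.add_lt_add (ENNReal.add_lt_add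
            (edist_lt_ofReal.2 (hclose l (hl.trans_le (min_le_left _ _)) y hy)) (hattr y hy))
            hhaus'
      _ = ENNReal.ofReal ε := by
          rw [← ENNReal.ofReal_add hε3.le hε3.le, ← ENNReal.ofReal_add (by positivity) hε3.le]
          ring_nf
  filter_upwards [hnear.prod_mk (eventually_le_atBot (sStar s₁))] with ⟨l, s⟩ ⟨hl, hs⟩ x hx
  obtain ⟨y, hy, hxy⟩ := (hproc l).image_subset_image_of_mapsTo (hinv s₁ s hs l)
    (hs.trans (hsStar s₁)) hs₁t ⟨x, hx, rfl⟩
  exact hxy ▸ hl y hy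

theorem stmt14_general {Λ X : Type*} [MetricSpace Λ] [CompactSpace Λ]
    [MetricSpace X]
    (S : Λ → ℝ → ℝ → X → X) (hproc : ∀ l : Λ, IsProcess (S l))
    -- (L1): pullback attractors
    (A : Λ → ℝ → Set X) (hA : ∀ l : Λ, IsPullbackAttractor (S l) (A l))
    -- (L3): continuity in `λ`, uniformly for `x` in bounded sets
    (hL3 : ∀ s t : ℝ, s ≤ t → ∀ B : Set X, IsBounded B → ∀ l₀ : Λ, ∀ ε : ℝ, 0 < ε →
      ∃ δ : ℝ, 0 < δ ∧ ∀ l : Λ, dist l l₀ < δ → ∀ x ∈ B,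
        dist (S l t s x) (S l₀ t s x) < ε)
    -- (U3): a common bounded uniformly positively invariant absorbing set `D₁`
    (D₁ : Set X) (hD₁ : IsBounded D₁)
    (sStar : ℝ → ℝ) (hsStar : ∀ t : ℝ, sStar t ≤ t)
    (hinv : ∀ t : ℝ, ∀ s ≤ sStar t, ∀ l : Λ, S l t s '' D₁ ⊆ D₁)
    (t : ℝ)
    -- continuity of `λ ↦ 𝒜_λ(t)` on all of `Λ`
    (hcont : ∀ l₀ : Λ, ∀ ε : ℝ, 0 < ε → ∃ δ : ℝ, 0 < δ ∧ ∀ l : Λ, dist l l₀ < δ →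
      hausdorffDist (A l t) (A l₀ t) < ε) :
    -- pullback equi-attraction at time `t` with absorbing set `D₁`
    ∀ ε : ℝ, 0 < ε → ∃ s₀ : ℝ, ∀ s ≤ s₀, ∀ l : Λ, ∀ x ∈ D₁,
      EMetric.infEdist (S l t s x) (A l t) < ENNReal.ofReal ε := by
  intro ε hε
  exact Filter.eventually_atBot.1 <| CompactSpace.eventually_forall_of_forall_eventually_nhds_prod
    fun l₀ ↦ eventually_nhds_prod_atBot_infEDist_lt hproc hA hL3 hD₁ hsStar hinv (hcont l₀) hε

/-- On a compact parameter space, under (U3), continuity of `λ ↦ 𝒜_λ(t)` in the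
Hausdorff metric implies pullback equi-attraction at time `t` with absorbing
set `D₁`. -/
theorem stmt14 {Λ X : Type*} [MetricSpace Λ] [CompactSpace Λ]
    [MetricSpace X] [CompleteSpace X]
    (S : Λ → ℝ → ℝ → X → X) (hproc : ∀ l : Λ, IsProcess (S l))
    -- (L1): pullback attractors
    (A : Λ → ℝ → Set X) (hA : ∀ l : Λ, IsPullbackAttractor (S l) (A l))
    -- (L3): continuity in `λ`, uniformly for `x` in bounded sets
    (hL3 : ∀ s t : ℝ, s ≤ t → ∀ B : Set X, IsBounded B → ∀ l₀ : Λ, ∀ ε : ℝ, 0 < ε →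
      ∃ δ : ℝ, 0 < δ ∧ ∀ l : Λ, dist l l₀ < δ → ∀ x ∈ B,
        dist (S l t s x) (S l₀ t s x) < ε)
    -- (U3): a common bounded uniformly positively invariant absorbing set `D₁`
    (D₁ : Set X) (hD₁ : IsBounded D₁) (hAD₁ : ∀ (l : Λ) (s : ℝ), A l s ⊆ D₁)
    (sStar : ℝ → ℝ) (hsStar : ∀ t : ℝ, sStar t ≤ t)
    (hinv : ∀ t : ℝ, ∀ s ≤ sStar t, ∀ l : Λ, S l t s '' D₁ ⊆ D₁)
    (t : ℝ)
    -- continuity of `λ ↦ 𝒜_λ(t)` on all of `Λ`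
    (hcont : ∀ l₀ : Λ, ∀ ε : ℝ, 0 < ε → ∃ δ : ℝ, 0 < δ ∧ ∀ l : Λ, dist l l₀ < δ →
      hausdorffDist (A l t) (A l₀ t) < ε) :
    -- pullback equi-attraction at time `t` with absorbing set `D₁`
    ∀ ε : ℝ, 0 < ε → ∃ s₀ : ℝ, ∀ s ≤ s₀, ∀ l : Λ, ∀ x ∈ D₁,
      EMetric.infEdist (S l t s x) (A l t) < ENNReal.ofReal ε :=
  stmt14_general S hproc A hA hL3 D₁ hD₁ sStar hsStar hinv t hcont
end

section
/- Let Λ and X be complete metric spaces and let S_λ(·,·), λ ∈ Λ, be a family of processes on X, each with uniform attractor 𝔸_λ. Suppose there exists a compact set K ⊆ X such that: (a) for every bounded B ⊆ X and each λ there exists t_{B,λ} with S_λ(t+s,s)B ⊆ K for all t ≥ t_{B,λ} and s ∈ ℝ; and (b) for each t > 0 the map λ ↦ S_λ(t+s,s)x is continuous uniformly for s ∈ ℝ and x ∈ K. If the family is uniformly equi-attracting, i.e. lim_{t→∞} sup_{λ∈Λ, s∈ℝ} ρ_X(S_λ(t+s,s)K, 𝔸_λ) = 0, then the map λ ↦ 𝔸_λ,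 into the nonempty compact subsets of X with the Hausdorff metric, is continuous at every λ ∈ Λ. -/
open Filter Topology Metric Bornology

/-- Auxiliary lemma: if `Aμ` is a uniform attractor of a process `S` admitting the
compact absorbing set `K`, and all images `S (t₀+s) s y` of points `y ∈ K` are within
`c` (in `infEdist`) of a set `Aν`, then every point of `Aμ` is within `c` of `Aν`. -/
lemma stmt15_aux {X : Type*} [MetricSpace X]
    (S : ℝ → ℝ → X → X) (hproc : IsProcess S)
    (Aμ Aν : Set X) (hAμ : IsUniformAttractor S Aμ)
    (K : Set X) (hK : IsCompact K)
    (habs : ∀ B : Set X, IsBounded B → ∃ tB : ℝ, ∀ t ≥ tB, ∀ s : ℝ,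
      ∀ x ∈ B, S (t + s) s x ∈ K)
    (t₀ : ℝ) (ht₀ : 0 < t₀) (c : ℝ)
    (hclose : ∀ s : ℝ, ∀ y ∈ K, EMetric.infEdist (S (t₀ + s) s y) Aν ≤ ENNReal.ofReal c) :
    ∀ a ∈ Aμ, EMetric.infEdist a Aν ≤ ENNReal.ofReal c := by
  set C : Set X := K ∩ {z | EMetric.infEdist z Aν ≤ ENNReal.ofReal c} with hCdef
  have hCclosed : IsClosed {z : X | EMetric.infEdist z Aν ≤ ENNReal.ofReal c} :=
    isClosed_le (EMetric.continuous_infEdist) continuous_const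
  have hCcompact : IsCompact C := hK.inter_right hCclosed
  have hCattr : UniformlyAttracts S C := by
    intro B hB ε hε
    obtain ⟨tB, htB⟩ := habs B hB
    refine ⟨t₀ + max tB 0, fun t ht s x hx => ?_⟩
    have htB' : tB ≤ max tB 0 := le_max_left _ _
    have ht1 : t - t₀ ≥ tB := by
      have := le_max_left tB 0
      linarith [ht]
    have hmem : S (t + s) s x ∈ C := by
      constructor
      · -- in K
        have : t ≥ tB := by
          have h0 : (0:ℝ) ≤ max tB 0 := le_max_right _ _
          linarith [ht]
        exact htB t this s x hx
      · -- close to Aν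
        set s₁ : ℝ := (t - t₀) + s with hs₁
        have hy : S s₁ s x ∈ K := htB (t - t₀) ht1 s x hx
        have hcoc : S (t + s) s₁ (S s₁ s x) = S (t + s) s x := by
          have h1 : s ≤ s₁ := by
            have h0 : (0:ℝ) ≤ max tB 0 := le_max_right _ _
            have : t - t₀ ≥ 0 := by linarith [ht]
            simp [hs₁]; linarith
          have h2 : s₁ ≤ t + s := by simp [hs₁]; linarith
          have := hproc.2.1 (t + s) s₁ s h1 h2
          exact congrFun this x
        have hts : t + s = t₀ + s₁ := by ring
        have := hclose s₁ (S s₁ s x) hy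
        rw [← hts, hcoc] at this
        exact this
    have : EMetric.infEdist (S (t + s) s x) C = 0 :=
      EMetric.infEdist_zero_of_mem hmem
    rw [this]
    exact ENNReal.ofReal_pos.2 hε
  have hsub : Aμ ⊆ C := hAμ.2.2 C hCcompact hCattr
  exact fun a ha => (hsub ha).2

/-- If the uniform attractors `𝔸_λ` are uniformly equi-attracting, then under the
standing assumptions (a compact uniformly absorbing set `K` and continuity in `λ`
uniformly in `s ∈ ℝ` and `x ∈ K`), the map `λ ↦ 𝔸_λ` is continuous at every
`λ ∈ Λ` in the Hausdorff metric. -/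
theorem stmt15 {Λ X : Type*} [MetricSpace Λ] [CompleteSpace Λ]
    [MetricSpace X] [CompleteSpace X]
    (S : Λ → ℝ → ℝ → X → X) (hproc : ∀ l : Λ, IsProcess (S l))
    (A : Λ → Set X) (hA : ∀ l : Λ, IsUniformAttractor (S l) (A l))
    (K : Set X) (hK : IsCompact K)
    -- (a): `K` uniformly absorbs every bounded set
    (habs : ∀ B : Set X, IsBounded B → ∀ l : Λ, ∃ tB : ℝ, ∀ t ≥ tB, ∀ s : ℝ,
      ∀ x ∈ B, S l (t + s) s x ∈ K)
    -- (b): continuity in `λ`, uniformly for `s ∈ ℝ` and `x ∈ K`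
    (hunif : ∀ t : ℝ, 0 < t → ∀ l₀ : Λ, ∀ ε : ℝ, 0 < ε → ∃ δ : ℝ, 0 < δ ∧
      ∀ l : Λ, dist l l₀ < δ → ∀ s : ℝ, ∀ x ∈ K,
        dist (S l (t + s) s x) (S l₀ (t + s) s x) < ε)
    -- uniform equi-attraction
    (hequi : ∀ ε : ℝ, 0 < ε → ∃ T : ℝ, ∀ t ≥ T, ∀ l : Λ, ∀ s : ℝ, ∀ x ∈ K,
      EMetric.infEdist (S l (t + s) s x) (A l) < ENNReal.ofReal ε) :
    ∀ l₀ : Λ, ∀ ε : ℝ, 0 < ε → ∃ δ : ℝ, 0 < δ ∧ ∀ l : Λ, dist l l₀ < δ →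
      hausdorffDist (A l) (A l₀) < ε := by
  intro l₀ ε hε
  have hε4 : 0 < ε / 4 := by linarith
  obtain ⟨Te, hTe⟩ := hequi (ε / 4) hε4
  set t₀ : ℝ := max Te 1 with ht₀def
  have ht₀pos : 0 < t₀ := lt_of_lt_of_le one_pos (le_max_right _ _)
  have ht₀Te : Te ≤ t₀ := le_max_left _ _
  obtain ⟨δ, hδpos, hδ⟩ := hunif t₀ ht₀pos l₀ (ε / 4) hε4
  refine ⟨δ, hδpos, fun l hl => ?_⟩
  -- the combined estimate, in both directions
  have key : ∀ μ ν : Λ,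
      (∀ s : ℝ, ∀ y ∈ K, dist (S μ (t₀ + s) s y) (S ν (t₀ + s) s y) < ε / 4) →
      ∀ s : ℝ, ∀ y ∈ K,
        EMetric.infEdist (S μ (t₀ + s) s y) (A ν) ≤ ENNReal.ofReal (ε / 2) := by
    intro μ ν hcls s y hy
    have h1 : EMetric.infEdist (S μ (t₀ + s) s y) (A ν) ≤
        edist (S μ (t₀ + s) s y) (S ν (t₀ + s) s y) +
          EMetric.infEdist (S ν (t₀ + s) s y) (A ν) :=
      EMetric.infEdist_le_edist_add_infEdist
    have h2 : edist (S μ (t₀ + s) s y) (S ν (t₀ + s) s y) < ENNReal.ofReal (ε / 4) :=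
      (edist_lt_ofReal).2 (hcls s y hy)
    have h3 : EMetric.infEdist (S ν (t₀ + s) s y) (A ν) < ENNReal.ofReal (ε / 4) :=
      hTe t₀ ht₀Te ν s y hy
    calc EMetric.infEdist (S μ (t₀ + s) s y) (A ν)
        ≤ _ := h1
      _ ≤ ENNReal.ofReal (ε / 4) + ENNReal.ofReal (ε / 4) :=
          add_le_add h2.le h3.le
      _ = ENNReal.ofReal (ε / 2) := by
          rw [← ENNReal.ofReal_add (by linarith) (by linarith)]; ring_nf
  have hll₀ : ∀ s : ℝ, ∀ y ∈ K, dist (S l (t₀ + s) s y) (S l₀ (t₀ + s) s y) < ε / 4 :=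
    fun s y hy => hδ l hl s y hy
  have hl₀l : ∀ s : ℝ, ∀ y ∈ K, dist (S l₀ (t₀ + s) s y) (S l (t₀ + s) s y) < ε / 4 :=
    fun s y hy => by rw [dist_comm]; exact hll₀ s y hy
  have dir1 : ∀ a ∈ A l, EMetric.infEdist a (A l₀) ≤ ENNReal.ofReal (ε / 2) :=
    stmt15_aux (S l) (hproc l) (A l) (A l₀) (hA l) K hK
      (fun B hB => habs B hB l) t₀ ht₀pos (ε / 2) (key l l₀ hll₀)
  have dir2 : ∀ a ∈ A l₀, EMetric.infEdist a (A l) ≤ ENNReal.ofReal (ε / 2) :=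
    stmt15_aux (S l₀) (hproc l₀) (A l₀) (A l) (hA l₀) K hK
      (fun B hB => habs B hB l₀) t₀ ht₀pos (ε / 2) (key l₀ l hl₀l)
  have hHe : EMetric.hausdorffEdist (A l) (A l₀) ≤ ENNReal.ofReal (ε / 2) :=
    EMetric.hausdorffEdist_le_of_infEdist dir1 dir2
  have : hausdorffDist (A l) (A l₀) ≤ ε / 2 := by
    rw [hausdorffDist]
    calc (EMetric.hausdorffEdist (A l) (A l₀)).toReal
        ≤ (ENNReal.ofReal (ε / 2)).toReal :=
          ENNReal.toReal_mono ENNReal.ofReal_ne_top hHe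
      _ = ε / 2 := ENNReal.toReal_ofReal (by linarith)
  linarith
end

section
/- Let σ, b > 0, let F : ℝ → ℝ satisfy |F(t)| ≤ F₀ for all t, and let x, y, w : [0,∞) → ℝ be differentiable functions satisfying x′ = −σx + σy, y′ = −y − σx − xw, and w′ = −bw + xy + F(t) for all t ≥ 0. Set σ₀ = min{1, σ, b/2} and |u(t)|² = x(t)² + y(t)² + w(t)². Then for every t ≥ 0, |u(t)|² ≤ |u(0)|² e^{−2σ₀ t} + F₀²/(2σ₀ b); in particular |u(t)| ≤ |u(0)| e^{−σ₀ t} + F₀/√(2σ₀ b). -/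
/-!
Along a solution, the energy `V = x² + y² + w²` satisfies
`V' = -2σx² - 2y² - 2bw² + 2wF`: the quadratic coupling terms `σxy` and `xyw` cancel.
Completing the square, `2wF ≤ bw² + F²/b`, so `V' ≤ F₀²/b - 2σ₀V`, and Grönwall's
inequality gives the bound on `V`; the bound on `√V` follows from subadditivity of the
square root.
-/

open Real Set

theorem Real.sqrt_add_le_add_sqrt {x y : ℝ} (hx : 0 ≤ x) (hy : 0 ≤ y) :
    √(x + y) ≤ √x + √y := by
  rw [Real.sqrt_le_left (by positivity)]
  nlinarith [Real.sq_sqrt hx, Real.sq_sqrt hy,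
    mul_nonneg (Real.sqrt_nonneg x) (Real.sqrt_nonneg y)]

theorem le_mul_exp_add_div_of_hasDerivWithinAt_le {f f' : ℝ → ℝ} {c d : ℝ}
    (hc : 0 < c) (hd : 0 ≤ d)
    (hf : ∀ t ≥ (0 : ℝ), HasDerivWithinAt f (f' t) (Ici 0) t)
    (bound : ∀ t ≥ (0 : ℝ), f' t ≤ d - c * f t) :
    ∀ t ≥ (0 : ℝ), f t ≤ f 0 * exp (-c * t) + d / c := by
  intro T hT
  have hf_right : ∀ t ∈ Ico 0 T, HasDerivWithinAt f (f' t) (Ici t) t := fun t ht =>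
    (hf t ht.1).mono (Ici_subset_Ici.mpr ht.1)
  have hgronwall := le_gronwallBound_of_liminf_deriv_right_le (K := -c) (ε := d)
    (fun t ht => (hf t ht.1).continuousWithinAt.mono (Icc_subset_Ici_self))
    (fun t ht _ hr => (hf_right t ht).liminf_right_slope_le hr) le_rfl
    (fun t ht => by linarith [bound t ht.1]) T ⟨hT, le_rfl⟩
  rw [gronwallBound_of_K_ne_0 (neg_ne_zero.mpr hc.ne'), sub_zero] at hgronwall
  have hdiv : d / -c * (exp (-c * T) - 1) ≤ d / c := by
    rw [div_neg, neg_mul, ← mul_neg, neg_sub]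
    exact mul_le_of_le_one_right (by positivity) (by linarith [exp_pos (-c * T)])
  linarith

theorem lorenz_energy_hasDerivWithinAt {σ b : ℝ} {F x y w : ℝ → ℝ} {s : Set ℝ} {t : ℝ}
    (hx : HasDerivWithinAt x (-σ * x t + σ * y t) s t)
    (hy : HasDerivWithinAt y (-y t - σ * x t - x t * w t) s t)
    (hw : HasDerivWithinAt w (-b * w t + x t * y t + F t) s t) :
    HasDerivWithinAt (fun t => x t ^ 2 + y t ^ 2 + w t ^ 2)
      (-2 * σ * x t ^ 2 - 2 * y t ^ 2 - 2 * b * w t ^ 2 + 2 * w t * F t) s t := by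
  refine (((hx.pow 2).add (hy.pow 2)).add (hw.pow 2)).congr_deriv ?_
  push_cast
  ring

theorem lorenz_dissipation_le {σ b σ₀ F₀ x y w f : ℝ} (hb : 0 < b)
    (hσ₀1 : σ₀ ≤ 1) (hσ₀σ : σ₀ ≤ σ) (hσ₀b : σ₀ ≤ b / 2) (hf : |f| ≤ F₀) :
    -2 * σ * x ^ 2 - 2 * y ^ 2 - 2 * b * w ^ 2 + 2 * w * f ≤
      F₀ ^ 2 / b - 2 * σ₀ * (x ^ 2 + y ^ 2 + w ^ 2) := by
  have hf_sq : f ^ 2 ≤ F₀ ^ 2 := sq_le_sq' (abs_le.mp hf).1 (abs_le.mp hf).2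
  have hsquare : 2 * w * f ≤ b * w ^ 2 + F₀ ^ 2 / b := by
    have : 0 ≤ (b * w - f) ^ 2 / b := by positivity
    have hexpand : (b * w - f) ^ 2 / b = b * w ^ 2 - 2 * w * f + f ^ 2 / b := by
      field_simp
      ring
    linarith [div_le_div_of_nonneg_right hf_sq hb.le]
  nlinarith [sq_nonneg x, sq_nonneg y, sq_nonneg w]

/-- Dissipativity estimate for the transformed non-autonomous Lorenz system:
with `σ₀ = min{1, σ, b/2}` and `|F(t)| ≤ F₀`, every solution of
`x′ = −σx + σy`, `y′ = −y − σx − xw`, `w′ = −bw + xy + F(t)` on `[0,∞)` satisfies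
`|u(t)|² ≤ |u(0)|² e^{−2σ₀t} + F₀²/(2σ₀b)`, and in particular
`|u(t)| ≤ |u(0)| e^{−σ₀t} + F₀/√(2σ₀b)`. -/
theorem stmt17 (σ b F₀ : ℝ) (hσ : 0 < σ) (hb : 0 < b)
    (F : ℝ → ℝ) (hF : ∀ t : ℝ, |F t| ≤ F₀)
    (x y w : ℝ → ℝ)
    (hx : ∀ t ≥ (0 : ℝ), HasDerivWithinAt x (-σ * x t + σ * y t) (Ici 0) t)
    (hy : ∀ t ≥ (0 : ℝ), HasDerivWithinAt y (-y t - σ * x t - x t * w t) (Ici 0) t)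
    (hw : ∀ t ≥ (0 : ℝ), HasDerivWithinAt w (-b * w t + x t * y t + F t) (Ici 0) t)
    (σ₀ : ℝ) (hσ₀ : σ₀ = min 1 (min σ (b / 2))) :
    ∀ t ≥ (0 : ℝ),
      x t ^ 2 + y t ^ 2 + w t ^ 2 ≤
        (x 0 ^ 2 + y 0 ^ 2 + w 0 ^ 2) * Real.exp (-2 * σ₀ * t) + F₀ ^ 2 / (2 * σ₀ * b) ∧
      Real.sqrt (x t ^ 2 + y t ^ 2 + w t ^ 2) ≤
        Real.sqrt (x 0 ^ 2 + y 0 ^ 2 + w 0 ^ 2) * Real.exp (-σ₀ * t) +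
          F₀ / Real.sqrt (2 * σ₀ * b) := by
  have hσ₀pos : 0 < σ₀ := hσ₀ ▸ lt_min one_pos (lt_min hσ (half_pos hb))
  have hF₀ : 0 ≤ F₀ := (abs_nonneg _).trans (hF 0)
  have henergy := le_mul_exp_add_div_of_hasDerivWithinAt_le (by positivity : 0 < 2 * σ₀)
    (by positivity : 0 ≤ F₀ ^ 2 / b)
    (fun t ht => lorenz_energy_hasDerivWithinAt (hx t ht) (hy t ht) (hw t ht))
    (fun t _ => lorenz_dissipation_le hb (hσ₀ ▸ min_le_left _ _)
      (hσ₀ ▸ (min_le_right _ _).trans (min_le_left _ _))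
      (hσ₀ ▸ (min_le_right _ _).trans (min_le_right _ _)) (hF t))
  intro t ht
  have hV : x t ^ 2 + y t ^ 2 + w t ^ 2 ≤
      (x 0 ^ 2 + y 0 ^ 2 + w 0 ^ 2) * exp (-2 * σ₀ * t) + F₀ ^ 2 / (2 * σ₀ * b) := by
    simpa only [div_div, mul_comm b, neg_mul] using henergy t ht
  refine ⟨hV, (Real.sqrt_le_sqrt hV).trans ?_⟩
  calc _ ≤ √((x 0 ^ 2 + y 0 ^ 2 + w 0 ^ 2) * exp (-2 * σ₀ * t)) +
          √(F₀ ^ 2 / (2 * σ₀ * b)) :=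
        Real.sqrt_add_le_add_sqrt (by positivity) (by positivity)
    _ = _ := by
      rw [Real.sqrt_mul (by positivity), ← Real.exp_half, Real.sqrt_div (sq_nonneg F₀),
        Real.sqrt_sq hF₀]
      ring_nf
end

section
/- Let R₀ ≥ 0 and let r : ℝ → ℝ be C¹ with |r(t)| ≤ R₀ and |r′(t)| ≤ R₀ for all t. Fix σ, b > 0, set σ₀ = min{1, σ, b/2} and F₀ = b(σ + R₀) + R₀, and let x, y, z : [0,∞) → ℝ be differentiable functions satisfying x′ = −σx + σy, y′ = r(t)x − y − xz, z′ = −bz + xy for all t ≥ 0. Writing |v(t)| = (x(t)² + y(t)² + z(t)²)^{1/2}, then for every t ≥ 0, |v(t)| ≤ (|v(0)| + σ + R₀) e^{−σ₀ t} + F₀/√(2σ₀ b) + (σ + R₀). -/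
/-!
With `w = z - σ - r(t)` the energy `V = x² + y² + w²` satisfies
`V' = -2σx² - 2y² - 2bw² + 2F(t)w` with `F = -b(σ + r) - r'`, and completing the square in `w`
gives `V' ≤ -2σ₀V + F₀²/b`. Grönwall yields `V(t) ≤ V(0)e^{-2σ₀t} + F₀²/(2σ₀b)`; taking square
roots and undoing the shift by `σ + r`, of size at most `σ + R₀`, at times `0` and `t` gives the
bound.
-/

open Real Set

theorem le_mul_exp_neg_add_div_of_deriv_le {V V' : ℝ → ℝ} {κ C : ℝ} (hκ : 0 < κ) (hC : 0 ≤ C)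
    (hV : ∀ t ≥ (0 : ℝ), HasDerivWithinAt V (V' t) (Ici 0) t)
    (bound : ∀ t ≥ (0 : ℝ), V' t ≤ -κ * V t + C) :
    ∀ t ≥ (0 : ℝ), V t ≤ V 0 * exp (-κ * t) + C / κ := by
  intro T hT
  have hcont : ContinuousOn V (Icc 0 T) :=
    fun t ht => (hV t ht.1).continuousWithinAt.mono Icc_subset_Ici_self
  have hslope : ∀ t ∈ Ico (0 : ℝ) T, ∀ ρ, V' t < ρ →
      ∃ᶠ s in nhdsWithin t (Ioi t), (s - t)⁻¹ * (V s - V t) < ρ := fun t ht _ hρ =>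
    ((hV t ht.1).mono (Ici_subset_Ici.2 ht.1)).liminf_right_slope_le hρ
  have H := le_gronwallBound_of_liminf_deriv_right_le hcont hslope le_rfl
    (fun t ht => bound t ht.1) T (right_mem_Icc.2 hT)
  rw [sub_zero, gronwallBound_of_K_ne_0 (neg_ne_zero.2 hκ.ne')] at H
  calc V T ≤ V 0 * exp (-κ * T) + C / -κ * (exp (-κ * T) - 1) := H
    _ = V 0 * exp (-κ * T) + C / κ * (1 - exp (-κ * T)) := by rw [div_neg]; ring
    _ ≤ V 0 * exp (-κ * T) + C / κ := by
        gcongr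
        exact mul_le_of_le_one_right (div_nonneg hC hκ.le) (by linarith [exp_pos (-κ * T)])

theorem sqrt_add_add_sq_le {a u : ℝ} (ha : 0 ≤ a) (c : ℝ) :
    √(a + (u + c) ^ 2) ≤ √(a + u ^ 2) + |c| := by
  have hu : |u| ≤ √(a + u ^ 2) := abs_le_sqrt (by linarith)
  have hsq : √(a + u ^ 2) ^ 2 = a + u ^ 2 := sq_sqrt (by positivity)
  have huc : u * c ≤ √(a + u ^ 2) * |c| :=
    calc u * c ≤ |u| * |c| := abs_mul u c ▸ le_abs_self (u * c)
      _ ≤ √(a + u ^ 2) * |c| := mul_le_mul_of_nonneg_right hu (abs_nonneg c)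
  rw [sqrt_le_left (by positivity)]
  nlinarith [sq_abs c]

theorem sqrt_mul_sq_add_sq_div_le {A e F D : ℝ} (hA : 0 ≤ A) (he : 0 ≤ e) (hF : 0 ≤ F)
    (hD : 0 ≤ D) : √(A * e ^ 2 + F ^ 2 / D) ≤ √A * e + F / √D := by
  rw [sqrt_le_left (by positivity)]
  have hsq : (√A * e + F / √D) ^ 2 = A * e ^ 2 + F ^ 2 / D + 2 * (√A * e) * (F / √D) := by
    rw [add_sq, mul_pow, div_pow, sq_sqrt hA, sq_sqrt hD]; ring
  rw [hsq]
  have : 0 ≤ 2 * (√A * e) * (F / √D) := by positivity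
  linarith

theorem two_mul_sub_sq_le_div {b w F F₀ : ℝ} (hb : 0 < b) (hF : |F| ≤ F₀) :
    2 * F * w - b * w ^ 2 ≤ F₀ ^ 2 / b := by
  rw [le_div_iff₀ hb]
  have hF2 : F ^ 2 ≤ F₀ ^ 2 := sq_le_sq' (abs_le.1 hF).1 (abs_le.1 hF).2
  nlinarith [sq_nonneg (b * w - F)]

theorem abs_add_le_add_of_abs_le {σ ρ R : ℝ} (hσ : 0 ≤ σ) (hρ : |ρ| ≤ R) : |σ + ρ| ≤ σ + R :=
  (abs_add_le _ _).trans (by rw [abs_of_nonneg hσ]; linarith)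

theorem abs_lorenz_forcing_le {b σ ρ ρ' R : ℝ} (hb : 0 ≤ b) (hσ : 0 ≤ σ) (hρ : |ρ| ≤ R)
    (hρ' : |ρ'| ≤ R) : |-b * (σ + ρ) - ρ'| ≤ b * (σ + R) + R :=
  calc |-b * (σ + ρ) - ρ'| ≤ |-b * (σ + ρ)| + |ρ'| := abs_sub _ _
    _ = b * |σ + ρ| + |ρ'| := by rw [abs_mul, abs_neg, abs_of_nonneg hb]
    _ ≤ b * (σ + R) + R := by
        gcongr
        exact abs_add_le_add_of_abs_le hσ hρ

section Lorenz

variable {σ b : ℝ} {r x y z : ℝ → ℝ}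

theorem hasDerivWithinAt_lorenz_energy (hr : Differentiable ℝ r)
    (hx : ∀ t ≥ (0 : ℝ), HasDerivWithinAt x (-σ * x t + σ * y t) (Ici 0) t)
    (hy : ∀ t ≥ (0 : ℝ), HasDerivWithinAt y (r t * x t - y t - x t * z t) (Ici 0) t)
    (hz : ∀ t ≥ (0 : ℝ), HasDerivWithinAt z (-b * z t + x t * y t) (Ici 0) t)
    {t : ℝ} (ht : 0 ≤ t) :
    HasDerivWithinAt (fun t => x t ^ 2 + y t ^ 2 + (z t - (σ + r t)) ^ 2)
      (-2 * σ * x t ^ 2 - 2 * y t ^ 2 - 2 * b * (z t - (σ + r t)) ^ 2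
        + 2 * (-b * (σ + r t) - deriv r t) * (z t - (σ + r t))) (Ici 0) t := by
  have hw := (hz t ht).sub ((hr t).hasDerivAt.const_add σ).hasDerivWithinAt
  refine ((((hx t ht).pow 2).add ((hy t ht).pow 2)).add (hw.pow 2)).congr_deriv ?_
  simp only [Pi.sub_apply]
  push_cast
  ring

theorem lorenz_energy_deriv_le {σ₀ F F₀ : ℝ} (X Y W : ℝ) (hb : 0 < b)
    (hσ₀σ : σ₀ ≤ σ) (hσ₀1 : σ₀ ≤ 1) (hσ₀b : 2 * σ₀ ≤ b) (hF : |F| ≤ F₀) :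
    -2 * σ * X ^ 2 - 2 * Y ^ 2 - 2 * b * W ^ 2 + 2 * F * W ≤
      -(2 * σ₀) * (X ^ 2 + Y ^ 2 + W ^ 2) + F₀ ^ 2 / b := by
  have hsq := two_mul_sub_sq_le_div (w := W) hb hF
  linarith [mul_le_mul_of_nonneg_right hσ₀σ (sq_nonneg X),
    mul_le_mul_of_nonneg_right hσ₀1 (sq_nonneg Y), mul_le_mul_of_nonneg_right hσ₀b (sq_nonneg W)]

end Lorenz

theorem stmt18_general (R₀ : ℝ)
    (r : ℝ → ℝ) (hr : ContDiff ℝ 1 r)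
    (hrb : ∀ t : ℝ, |r t| ≤ R₀) (hrb' : ∀ t : ℝ, |deriv r t| ≤ R₀)
    (σ b : ℝ) (hσ : 0 < σ) (hb : 0 < b)
    (σ₀ F₀ : ℝ) (hσ₀ : σ₀ = min 1 (min σ (b / 2))) (hF₀ : F₀ = b * (σ + R₀) + R₀)
    (x y z : ℝ → ℝ)
    (hx : ∀ t ≥ (0 : ℝ), HasDerivWithinAt x (-σ * x t + σ * y t) (Ici 0) t)
    (hy : ∀ t ≥ (0 : ℝ), HasDerivWithinAt y (r t * x t - y t - x t * z t) (Ici 0) t)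
    (hz : ∀ t ≥ (0 : ℝ), HasDerivWithinAt z (-b * z t + x t * y t) (Ici 0) t) :
    ∀ t ≥ (0 : ℝ),
      Real.sqrt (x t ^ 2 + y t ^ 2 + z t ^ 2) ≤
        (Real.sqrt (x 0 ^ 2 + y 0 ^ 2 + z 0 ^ 2) + σ + R₀) * Real.exp (-σ₀ * t) +
          F₀ / Real.sqrt (2 * σ₀ * b) + (σ + R₀) := by
  intro T hT
  have hσ₀pos : 0 < σ₀ := hσ₀ ▸ lt_min one_pos (lt_min hσ (half_pos hb))
  obtain ⟨hσ₀1, hσ₀_min⟩ := le_min_iff.1 hσ₀.le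
  obtain ⟨hσ₀σ, hσ₀b⟩ := le_min_iff.1 hσ₀_min
  have hshift : ∀ t, |σ + r t| ≤ σ + R₀ := fun t => abs_add_le_add_of_abs_le hσ.le (hrb t)
  have hF : ∀ t, |-b * (σ + r t) - deriv r t| ≤ F₀ := fun t =>
    hF₀ ▸ abs_lorenz_forcing_le hb.le hσ.le (hrb t) (hrb' t)
  set V := fun t => x t ^ 2 + y t ^ 2 + (z t - (σ + r t)) ^ 2
  have hdecay : V T ≤ V 0 * exp (-(2 * σ₀) * T) + F₀ ^ 2 / b / (2 * σ₀) :=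
    le_mul_exp_neg_add_div_of_deriv_le (by positivity) (by positivity)
      (fun t ht => hasDerivWithinAt_lorenz_energy (hr.differentiable one_ne_zero) hx hy hz ht)
      (fun t _ => lorenz_energy_deriv_le _ _ _ hb hσ₀σ hσ₀1 (by linarith) (hF t)) T hT
  have hsqrtV : √(V T) ≤ √(V 0) * exp (-σ₀ * T) + F₀ / √(2 * σ₀ * b) := by
    have hexp : exp (-(2 * σ₀) * T) = exp (-σ₀ * T) ^ 2 := by rw [← exp_nat_mul]; ring_nf
    rw [hexp, div_div, mul_comm b] at hdecay
    exact (sqrt_le_sqrt hdecay).trans (sqrt_mul_sq_add_sq_div_le (by positivity)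
      (exp_pos _).le ((abs_nonneg _).trans (hF 0)) (by positivity))
  have hV0 : √(V 0) ≤ √(x 0 ^ 2 + y 0 ^ 2 + z 0 ^ 2) + (σ + R₀) := by
    have := sqrt_add_add_sq_le (u := z 0) (by positivity : 0 ≤ x 0 ^ 2 + y 0 ^ 2) (-(σ + r 0))
    rw [abs_neg, ← sub_eq_add_neg] at this
    linarith [hshift 0]
  have hVT : √(x T ^ 2 + y T ^ 2 + z T ^ 2) ≤ √(V T) + (σ + R₀) := by
    have := sqrt_add_add_sq_le (u := z T - (σ + r T))
      (by positivity : 0 ≤ x T ^ 2 + y T ^ 2) (σ + r T)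
    rw [sub_add_cancel] at this
    linarith [hshift T]
  linarith [mul_le_mul_of_nonneg_right hV0 (exp_pos (-σ₀ * T)).le]

/-- Uniform-in-time bound for the non-autonomous Lorenz system with `C¹` Rayleigh
parameter `r(t)` satisfying `|r(t)|, |r′(t)| ≤ R₀`: with `σ₀ = min{1, σ, b/2}` and
`F₀ = b(σ + R₀) + R₀`, every solution of `x′ = −σx + σy`, `y′ = r(t)x − y − xz`,
`z′ = −bz + xy` on `[0,∞)` satisfies
`|v(t)| ≤ (|v(0)| + σ + R₀) e^{−σ₀t} + F₀/√(2σ₀b) + (σ + R₀)`. -/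
theorem stmt18 (R₀ : ℝ) (hR₀ : 0 ≤ R₀)
    (r : ℝ → ℝ) (hr : ContDiff ℝ 1 r)
    (hrb : ∀ t : ℝ, |r t| ≤ R₀) (hrb' : ∀ t : ℝ, |deriv r t| ≤ R₀)
    (σ b : ℝ) (hσ : 0 < σ) (hb : 0 < b)
    (σ₀ F₀ : ℝ) (hσ₀ : σ₀ = min 1 (min σ (b / 2))) (hF₀ : F₀ = b * (σ + R₀) + R₀)
    (x y z : ℝ → ℝ)
    (hx : ∀ t ≥ (0 : ℝ), HasDerivWithinAt x (-σ * x t + σ * y t) (Ici 0) t)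
    (hy : ∀ t ≥ (0 : ℝ), HasDerivWithinAt y (r t * x t - y t - x t * z t) (Ici 0) t)
    (hz : ∀ t ≥ (0 : ℝ), HasDerivWithinAt z (-b * z t + x t * y t) (Ici 0) t) :
    ∀ t ≥ (0 : ℝ),
      Real.sqrt (x t ^ 2 + y t ^ 2 + z t ^ 2) ≤
        (Real.sqrt (x 0 ^ 2 + y 0 ^ 2 + z 0 ^ 2) + σ + R₀) * Real.exp (-σ₀ * t) +
          F₀ / Real.sqrt (2 * σ₀ * b) + (σ + R₀) :=
  stmt18_general R₀ r hr hrb hrb' σ b hσ hb σ₀ F₀ hσ₀ hF₀ x y z hx hy hz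
end
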